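/- arXiv:1603.07131 — 7 statements merged into one kernel-verified Lean document; each statement's English description precedes it below -/
import Mathlib

section
/- Let E be a nontrivial finite-dimensional real normed space and A a continuous linear operator on E. Then the limit m_l(A) := lim_{h→0⁺} (m(I + hA) − 1)/h exists, and m_l(A) = −l(−A), where l(−A) := lim_{h→0⁺} (‖I − hA‖ − 1)/h (this latter limit exists because h ↦ ‖I + hB‖ is convex for every operator B). -/
open Filter Topology Set

/-- The minimum expansion `m(B) = inf_{‖z‖=1} ‖B z‖` of a continuous linear operator. -/
noncomputable def minExp {E : Type*} [NormedAddCommGroup E] [NormedSpace ℝ E]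
    (B : E →L[ℝ] E) : ℝ :=
  ⨅ z : Metric.sphere (0 : E) 1, ‖B (z : E)‖

set_option maxHeartbeats 1000000 in
set_option synthInstance.maxHeartbeats 400000 in
/-- The limit defining the logarithmic minimum `m_l(A)` exists and equals `-l(-A)`,
where `l(-A)` is the logarithmic norm of `-A`. -/
theorem logMin_exists_eq_neg_logNorm_neg
    {E : Type*} [NormedAddCommGroup E] [NormedSpace ℝ E]
    [FiniteDimensional ℝ E] [Nontrivial E] (A : E →L[ℝ] E) :
    ∃ l : ℝ,
      Tendsto (fun h : ℝ => (‖(1 : E →L[ℝ] E) + h • (-A)‖ - 1) / h)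
        (𝓝[>] (0 : ℝ)) (𝓝 l) ∧
      Tendsto (fun h : ℝ => (minExp ((1 : E →L[ℝ] E) + h • A) - 1) / h)
        (𝓝[>] (0 : ℝ)) (𝓝 (-l)) := by
  set B : E →L[ℝ] E := -A with hB
  set f : ℝ → ℝ := fun h => ‖(1 : E →L[ℝ] E) + h • B‖ with hf
  have hf0 : f 0 = 1 := by simp [hf]
  -- convexity of f
  have hconv : ConvexOn ℝ (univ : Set ℝ) f := by
    refine ⟨convex_univ, fun x _ y _ a b ha hb hab => ?_⟩
    simp only [hf, smul_eq_mul]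
    have h1 : a • (1 : E →L[ℝ] E) + b • (1 : E →L[ℝ] E) = 1 := by
      rw [← add_smul, hab, one_smul]
    have key : (1 : E →L[ℝ] E) + (a * x + b * y) • B
        = a • ((1 : E →L[ℝ] E) + x • B) + b • ((1 : E →L[ℝ] E) + y • B) := by
      nth_rewrite 1 [← h1]
      module
    rw [key]
    have e1 := norm_smul a ((1 : E →L[ℝ] E) + x • B)
    have e2 := norm_smul b ((1 : E →L[ℝ] E) + y • B)
    rw [Real.norm_of_nonneg ha] at e1
    rw [Real.norm_of_nonneg hb] at e2
    calc ‖a • ((1 : E →L[ℝ] E) + x • B) + b • ((1 : E →L[ℝ] E) + y • B)‖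
        ≤ ‖a • ((1 : E →L[ℝ] E) + x • B)‖ + ‖b • ((1 : E →L[ℝ] E) + y • B)‖ := norm_add_le _ _
      _ = a * ‖(1 : E →L[ℝ] E) + x • B‖ + b * ‖(1 : E →L[ℝ] E) + y • B‖ := by rw [e1, e2]
  set g : ℝ → ℝ := fun h => (f h - 1) / h with hg
  have hg_mono : MonotoneOn g (Ioi (0 : ℝ)) := by
    intro x hx y hy hxy
    have := hconv.secant_mono (a := 0) (mem_univ 0) (mem_univ x) (mem_univ y)
      (ne_of_gt hx) (ne_of_gt hy) hxy
    simpa [hg, hf0, sub_zero] using this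
  -- lower bound for f
  have hf_lb : ∀ h : ℝ, 0 ≤ h → 1 - h * ‖A‖ ≤ f h := by
    intro h h0
    have e1 : ‖h • B‖ = h * ‖A‖ := by
      have := norm_smul h B
      rwa [Real.norm_of_nonneg h0, hB, norm_neg] at this
    have e2 : ‖(1 : E →L[ℝ] E)‖ - ‖-(h • B)‖ ≤ ‖(1 : E →L[ℝ] E) - -(h • B)‖ :=
      norm_sub_norm_le _ _
    rw [sub_neg_eq_add, norm_neg, norm_one, e1] at e2
    exact e2
  have hg_lb : ∀ h ∈ Ioi (0 : ℝ), -‖A‖ ≤ g h := by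
    intro h hh
    rw [hg]
    rw [le_div_iff₀ hh]
    have := hf_lb h (le_of_lt hh)
    nlinarith
  have hbdd : BddBelow (g '' Ioi (0 : ℝ)) := by
    refine ⟨-‖A‖, ?_⟩
    rintro _ ⟨h, hh, rfl⟩
    exact hg_lb h hh
  set l : ℝ := sInf (g '' Ioi (0 : ℝ)) with hl
  have h1 : Tendsto g (𝓝[>] (0 : ℝ)) (𝓝 l) :=
    hg_mono.tendsto_nhdsGT hbdd
  refine ⟨l, h1, ?_⟩
  -- continuity of f, tendsto 1
  have hf_cont : Continuous f := by
    have : Continuous fun h : ℝ => (1 : E →L[ℝ] E) + h • B :=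
      continuous_const.add (continuous_id.smul continuous_const)
    exact this.norm
  have hf_tendsto : Tendsto f (𝓝[>] (0 : ℝ)) (𝓝 1) := by
    have := (hf_cont.tendsto 0).mono_left (nhdsWithin_le_nhds (s := Ioi (0:ℝ)))
    rwa [hf0] at this
  set c : ℝ := ‖A‖ ^ 2 with hc
  -- sphere nonempty
  have hsph : (Metric.sphere (0 : E) 1).Nonempty := NormedSpace.sphere_nonempty.mpr zero_le_one
  haveI : Nonempty (Metric.sphere (0 : E) 1) := hsph.coe_sort
  -- lower bound for minExp
  have hm_lb : ∀ h : ℝ, 2 - f h ≤ minExp ((1 : E →L[ℝ] E) + h • A) := by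
    intro h
    refine le_ciInf fun z => ?_
    have hz : ‖(z : E)‖ = 1 := mem_sphere_zero_iff_norm.mp z.2
    have hsum : ((1 : E →L[ℝ] E) + h • A) (z : E) + ((1 : E →L[ℝ] E) + h • B) (z : E)
        = (2 : ℝ) • (z : E) := by
      simp only [hB, ContinuousLinearMap.add_apply, ContinuousLinearMap.one_apply,
        ContinuousLinearMap.smul_apply, ContinuousLinearMap.neg_apply, smul_neg, two_smul]
      abel
    have h2 : (2 : ℝ) ≤ ‖((1 : E →L[ℝ] E) + h • A) (z : E)‖
        + ‖((1 : E →L[ℝ] E) + h • B) (z : E)‖ := by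
      have hle := norm_add_le (((1 : E →L[ℝ] E) + h • A) (z : E))
        (((1 : E →L[ℝ] E) + h • B) (z : E))
      rw [hsum, norm_smul, hz] at hle
      simpa using hle
    have h3 : ‖((1 : E →L[ℝ] E) + h • B) (z : E)‖ ≤ f h := by
      have := ((1 : E →L[ℝ] E) + h • B).le_opNorm (z : E)
      rwa [hz, mul_one] at this
    linarith
  -- positivity of f for small h
  have hδ : (0 : ℝ) < (‖A‖ + 1)⁻¹ := by positivity
  have hfh_pos : ∀ h ∈ Ioo (0 : ℝ) (‖A‖ + 1)⁻¹, 0 < f h := by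
    intro h hh
    have hlt : h * ‖A‖ < 1 := by
      have : h * (‖A‖ + 1) < (‖A‖ + 1)⁻¹ * (‖A‖ + 1) :=
        mul_lt_mul_of_pos_right hh.2 (by positivity)
      rw [inv_mul_cancel₀ (by positivity : (‖A‖ : ℝ) + 1 ≠ 0)] at this
      nlinarith [hh.1]
    have := hf_lb h (le_of_lt hh.1)
    linarith
  -- upper bound for minExp, for small positive h
  have hm_ub : ∀ h ∈ Ioo (0 : ℝ) (‖A‖ + 1)⁻¹,
      minExp ((1 : E →L[ℝ] E) + h • A) ≤ (1 + h ^ 2 * c) / f h := by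
    intro h hh
    have hh0 : (0 : ℝ) < h := hh.1
    have hfp : 0 < f h := hfh_pos h hh
    obtain ⟨z, hz_mem, hz_max⟩ := (isCompact_sphere (0 : E) 1).exists_isMaxOn hsph
      (((((1 : E →L[ℝ] E) + h • B).continuous).norm).continuousOn)
    have hz : ‖z‖ = 1 := mem_sphere_zero_iff_norm.mp hz_mem
    have hz_max' : ∀ x ∈ Metric.sphere (0:E) 1, ‖((1 : E →L[ℝ] E) + h • B) x‖
        ≤ ‖((1 : E →L[ℝ] E) + h • B) z‖ := hz_max
    have hattain : ‖((1 : E →L[ℝ] E) + h • B) z‖ = f h := by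
      refine le_antisymm ?_ ?_
      · have := ((1 : E →L[ℝ] E) + h • B).le_opNorm z
        rwa [hz, mul_one] at this
      · refine ContinuousLinearMap.opNorm_le_of_unit_norm (norm_nonneg _) fun x hx => ?_
        exact hz_max' x (mem_sphere_zero_iff_norm.mpr hx)
    set u : E := ((1 : E →L[ℝ] E) + h • B) z with hu_def
    have hu_norm : ‖u‖ = f h := hattain
    have hu_pos : 0 < ‖u‖ := by rw [hu_norm]; exact hfp
    set w : E := ‖u‖⁻¹ • u with hw_def
    have hw : ‖w‖ = 1 := by
      rw [hw_def, norm_smul, Real.norm_eq_abs, abs_of_pos (inv_pos.mpr hu_pos),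
        inv_mul_cancel₀ (ne_of_gt hu_pos)]
    have hmul : ((1 : E →L[ℝ] E) + h • A) * ((1 : E →L[ℝ] E) + h • B)
        = 1 - (h * h) • (A * A) := by
      rw [hB]
      have e : (h • A) * (h • (-A)) = -((h * h) • (A * A)) := by
        rw [smul_mul_assoc, mul_smul_comm, smul_smul, mul_neg, smul_neg]
      rw [mul_add, add_mul, add_mul, e]
      simp only [one_mul, mul_one]
      module
    have happly : ((1 : E →L[ℝ] E) + h • A) u = z - (h * h) • A (A z) := by
      have e : ((1 : E →L[ℝ] E) + h • A) u
          = (((1 : E →L[ℝ] E) + h • A) * ((1 : E →L[ℝ] E) + h • B)) z := rfl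
      rw [e, hmul]
      simp
    have hAA : ‖A (A z)‖ ≤ ‖A‖ ^ 2 := by
      calc ‖A (A z)‖ ≤ ‖A‖ * ‖A z‖ := A.le_opNorm _
        _ ≤ ‖A‖ * (‖A‖ * ‖z‖) :=
            mul_le_mul_of_nonneg_left (A.le_opNorm z) (norm_nonneg A)
        _ = ‖A‖ ^ 2 := by rw [hz]; ring
    have hub : ‖((1 : E →L[ℝ] E) + h • A) u‖ ≤ 1 + h ^ 2 * c := by
      rw [happly, hc]
      calc ‖z - (h * h) • A (A z)‖ ≤ ‖z‖ + ‖(h * h) • A (A z)‖ := norm_sub_le _ _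
        _ ≤ 1 + h ^ 2 * ‖A‖ ^ 2 := by
            rw [hz, norm_smul, Real.norm_eq_abs, abs_of_pos (by positivity : (0:ℝ) < h * h)]
            nlinarith [norm_nonneg (A (A z)), hAA]
    have hmem : w ∈ Metric.sphere (0 : E) 1 := mem_sphere_zero_iff_norm.mpr hw
    have hle : minExp ((1 : E →L[ℝ] E) + h • A) ≤ ‖((1 : E →L[ℝ] E) + h • A) w‖ := by
      refine ciInf_le ⟨0, ?_⟩ (⟨w, hmem⟩ : Metric.sphere (0 : E) 1)
      rintro _ ⟨z', rfl⟩
      exact norm_nonneg _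
    refine hle.trans ?_
    rw [hw_def, map_smul, norm_smul, Real.norm_eq_abs, abs_of_pos (inv_pos.mpr hu_pos),
      hu_norm, div_eq_inv_mul]
    exact mul_le_mul_of_nonneg_left hub (by positivity)
  -- squeeze
  have hmemIoo : Ioo (0:ℝ) (‖A‖+1)⁻¹ ∈ 𝓝[>] (0:ℝ) := Ioo_mem_nhdsGT_of_mem ⟨le_refl 0, hδ⟩
  have hlow : Tendsto (fun h : ℝ => (2 - f h - 1) / h) (𝓝[>] (0:ℝ)) (𝓝 (-l)) := by
    have e : (fun h : ℝ => (2 - f h - 1) / h) = fun h => -((f h - 1) / h) := by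
      funext h; rw [← neg_div]; ring_nf
    rw [e]
    exact h1.neg
  have hupp : Tendsto (fun h : ℝ => (-(g h) + h * c) / f h) (𝓝[>] (0:ℝ)) (𝓝 (-l)) := by
    have hnum : Tendsto (fun h : ℝ => -(g h) + h * c) (𝓝[>] (0:ℝ)) (𝓝 (-l)) := by
      have h2 : Tendsto (fun h : ℝ => h * c) (𝓝[>] (0:ℝ)) (𝓝 0) := by
        have h3 : Tendsto (fun h : ℝ => h * c) (𝓝 (0:ℝ)) (𝓝 (0 * c)) :=
          (continuous_id.mul continuous_const).tendsto 0
        simpa using h3.mono_left (nhdsWithin_le_nhds (s := Ioi (0:ℝ)))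
      simpa using h1.neg.add h2
    have := hnum.div hf_tendsto one_ne_zero
    simpa only [div_one, Pi.div_def] using this
  refine tendsto_of_tendsto_of_tendsto_of_le_of_le' hlow hupp ?_ ?_
  · filter_upwards [self_mem_nhdsWithin] with h hh
    have := hm_lb h
    have hh0 : (0:ℝ) < h := mem_Ioi.mp hh
    gcongr
  · filter_upwards [hmemIoo] with h hh
    have hh0 : (0:ℝ) < h := hh.1
    have hfp : 0 < f h := hfh_pos h hh
    have hub := hm_ub h hh
    have key : ((1 + h ^ 2 * c) / f h - 1) / h = (-(g h) + h * c) / f h := by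
      rw [hg]
      field_simp
      ring
    calc (minExp ((1 : E →L[ℝ] E) + h • A) - 1) / h
        ≤ ((1 + h ^ 2 * c) / f h - 1) / h := by gcongr
      _ = (-(g h) + h * c) / f h := key
end

section
/- Let E be a nontrivial finite-dimensional real normed space. The convergence of the difference quotients defining the logarithmic minimum is locally uniform: for every compact set K of linear operators on E, sup_{A ∈ K} |(m(I + hA) − 1)/h − m_l(A)| → 0 as h → 0⁺. -/
open Filter Topology

open Set Metric

/-- The logarithmic minimum `m_l(A) = lim_{h→0⁺} (m(I + hA) - 1)/h`. -/
noncomputable def logMin {E : Type*} [NormedAddCommGroup E] [NormedSpace ℝ E]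
    (A : E →L[ℝ] E) : ℝ :=
  limUnder (𝓝[>] (0 : ℝ)) (fun h : ℝ => (minExp ((1 : E →L[ℝ] E) + h • A) - 1) / h)

section aux

variable {E : Type*} [NormedAddCommGroup E] [NormedSpace ℝ E] [Nontrivial E]

noncomputable def phi (A : E →L[ℝ] E) (h : ℝ) : ℝ := (minExp ((1 : E →L[ℝ] E) + h • A) - 1) / h

instance : Nonempty (Metric.sphere (0 : E) 1) :=
  (NormedSpace.sphere_nonempty.2 zero_le_one).to_subtype

lemma minExp_le (B : E →L[ℝ] E) (z : Metric.sphere (0 : E) 1) : minExp B ≤ ‖B (z : E)‖ :=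
  ciInf_le ⟨0, fun _ ⟨z, hz⟩ => hz ▸ norm_nonneg _⟩ z

lemma le_minExp {B : E →L[ℝ] E} {c : ℝ} (hc : ∀ z : Metric.sphere (0 : E) 1, c ≤ ‖B (z : E)‖) :
    c ≤ minExp B := le_ciInf hc

lemma norm_sphere (z : Metric.sphere (0 : E) 1) : ‖(z : E)‖ = 1 := by
  have := z.2; simpa [Metric.mem_sphere, dist_eq_norm] using this

lemma minExp_one : minExp (1 : E →L[ℝ] E) = 1 := by
  have : ∀ z : Metric.sphere (0 : E) 1, ‖(1 : E →L[ℝ] E) (z : E)‖ = 1 := fun z => by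
    simp [norm_sphere z]
  simp only [minExp, this, ciInf_const]

lemma minExp_lip (B C : E →L[ℝ] E) : |minExp B - minExp C| ≤ ‖B - C‖ := by
  have key : ∀ B C : E →L[ℝ] E, minExp B ≤ minExp C + ‖B - C‖ := by
    intro B C
    have h1 : ∀ z : Metric.sphere (0 : E) 1, minExp B - ‖B - C‖ ≤ ‖C (z : E)‖ := by
      intro z
      have h2 : ‖B (z : E)‖ ≤ ‖C (z : E)‖ + ‖B - C‖ := by
        have : ‖B (z : E) - C (z : E)‖ ≤ ‖B - C‖ := by
          have := (B - C).le_opNorm (z : E)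
          simpa [norm_sphere z] using this
        have := norm_sub_norm_le (B (z : E)) (C (z : E))
        linarith
      have := minExp_le B z
      linarith
    have := le_minExp (B := C) (c := minExp B - ‖B - C‖) h1
    linarith
  have h1 := key B C
  have h2 := key C B
  rw [abs_sub_le_iff]
  constructor
  · linarith
  · have : ‖C - B‖ = ‖B - C‖ := norm_sub_rev _ _
    linarith

lemma phi_lip {A B : E →L[ℝ] E} {h : ℝ} (hh : 0 < h) : |phi A h - phi B h| ≤ ‖A - B‖ := by
  unfold phi
  rw [div_sub_div_same, abs_div, abs_of_pos hh]
  have e : ((1 : E →L[ℝ] E) + h • A) - ((1 : E →L[ℝ] E) + h • B) = h • (A - B) := by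
    rw [smul_sub]; abel
  have h1 := minExp_lip ((1 : E →L[ℝ] E) + h • A) ((1 : E →L[ℝ] E) + h • B)
  rw [e, norm_smul h (A - B), Real.norm_eq_abs, abs_of_pos hh] at h1
  have h2 : minExp ((1 : E →L[ℝ] E) + h • A) - 1 - (minExp ((1 : E →L[ℝ] E) + h • B) - 1)
      = minExp ((1 : E →L[ℝ] E) + h • A) - minExp ((1 : E →L[ℝ] E) + h • B) := by ring
  rw [h2, div_le_iff₀ hh]
  linarith [h1]

lemma phi_abs_le {A : E →L[ℝ] E} {h : ℝ} (hh : 0 < h) : |phi A h| ≤ ‖A‖ := by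
  unfold phi
  rw [abs_div, abs_of_pos hh, div_le_iff₀ hh]
  have h1 := minExp_lip ((1 : E →L[ℝ] E) + h • A) 1
  have e : ((1 : E →L[ℝ] E) + h • A) - 1 = h • A := by abel
  rw [minExp_one, e, norm_smul h A, Real.norm_eq_abs, abs_of_pos hh] at h1
  linarith [h1]

lemma phi_mono (A : E →L[ℝ] E) : MonotoneOn (phi A) (Ioi (0 : ℝ)) := by
  rintro h (hh : (0:ℝ) < h) h' (hh' : (0:ℝ) < h') hle
  have key : ∀ z : Metric.sphere (0 : E) 1,
      (h' * (minExp ((1 : E →L[ℝ] E) + h • A) - 1) + h) / h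
        ≤ ‖((1 : E →L[ℝ] E) + h' • A) (z : E)‖ := by
    intro z
    set X := ‖((1 : E →L[ℝ] E) + h' • A) (z : E)‖ with hX
    have hc : 0 ≤ 1 - h / h' := by
      rw [sub_nonneg, div_le_one hh']; exact hle
    have hc2 : (0:ℝ) ≤ h / h' := le_of_lt (div_pos hh hh')
    have decomp : ((1 : E →L[ℝ] E) + h • A) (z : E)
        = (1 - h/h') • (z : E) + (h/h') • (((1 : E →L[ℝ] E) + h' • A) (z : E)) := by
      simp only [ContinuousLinearMap.add_apply, ContinuousLinearMap.one_apply,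
        ContinuousLinearMap.smul_apply, smul_add, smul_smul]
      rw [sub_smul, one_smul]
      have : h / h' * h' = h := div_mul_cancel₀ h (ne_of_gt hh')
      rw [this]
      abel
    have hn : ‖((1 : E →L[ℝ] E) + h • A) (z : E)‖ ≤ (1 - h/h') + (h/h') * X := by
      rw [decomp]
      calc ‖(1 - h/h') • (z : E) + (h/h') • (((1 : E →L[ℝ] E) + h' • A) (z : E))‖
          ≤ ‖(1 - h/h') • (z : E)‖ + ‖(h/h') • (((1 : E →L[ℝ] E) + h' • A) (z : E))‖ :=
            norm_add_le _ _
        _ = (1 - h/h') + (h/h') * X := by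
            rw [norm_smul, norm_smul, Real.norm_eq_abs, Real.norm_eq_abs,
              abs_of_nonneg hc, abs_of_nonneg hc2, norm_sphere z, mul_one]
    have hm := (minExp_le ((1 : E →L[ℝ] E) + h • A) z).trans hn
    have h6 := mul_le_mul_of_nonneg_left hm hh'.le
    have h7 : h' * (1 - h/h' + h/h' * X) = h' - h + h * X := by
      field_simp
    rw [h7] at h6
    rw [div_le_iff₀ hh]
    nlinarith [h6]
  have hfin := le_minExp (B := (1 : E →L[ℝ] E) + h' • A) key
  rw [div_le_iff₀ hh] at hfin
  unfold phi
  rw [div_le_div_iff₀ hh hh']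
  nlinarith [hfin]

noncomputable def LL (A : E →L[ℝ] E) : ℝ := sInf (phi A '' Ioi (0:ℝ))

lemma phi_bddBelow (A : E →L[ℝ] E) : BddBelow (phi A '' Ioi (0:ℝ)) := by
  refine ⟨-‖A‖, ?_⟩
  rintro x ⟨h, hh, rfl⟩
  have := phi_abs_le (A := A) (hh := hh)
  exact neg_le_of_abs_le this

lemma phi_tendsto (A : E →L[ℝ] E) : Tendsto (phi A) (𝓝[>] (0:ℝ)) (𝓝 (LL A)) :=
  (phi_mono A).tendsto_nhdsGT (phi_bddBelow A)

lemma logMin_eq (A : E →L[ℝ] E) : logMin A = LL A :=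
  (phi_tendsto A).limUnder_eq

lemma LL_le_phi {A : E →L[ℝ] E} {h : ℝ} (hh : 0 < h) : LL A ≤ phi A h :=
  csInf_le (phi_bddBelow A) ⟨h, hh, rfl⟩

lemma LL_lip (A B : E →L[ℝ] E) : |LL A - LL B| ≤ ‖A - B‖ := by
  have key : ∀ A B : E →L[ℝ] E, LL A ≤ LL B + ‖A - B‖ := by
    intro A B
    have : ∀ h ∈ Ioi (0:ℝ), LL A - ‖A - B‖ ≤ phi B h := by
      intro h hh
      have h1 := LL_le_phi (A := A) (hh := hh)
      have h2 := phi_lip (A := A) (B := B) (hh := hh)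
      have := abs_sub_le_iff.1 h2
      linarith [this.1]
    have h3 : LL A - ‖A - B‖ ≤ LL B := by
      refine le_csInf ⟨phi B 1, ⟨1, by norm_num, rfl⟩⟩ ?_
      rintro x ⟨h, hh, rfl⟩
      exact this h hh
    linarith
  have h1 := key A B
  have h2 := key B A
  rw [abs_sub_le_iff]
  exact ⟨by linarith, by rw [← norm_sub_rev]; linarith⟩

end aux

/-- The difference quotients defining the logarithmic minimum converge locally uniformly:
on every compact set `K` of operators, the supremum over `K` of the error tends to `0`
as `h → 0⁺`. -/
theorem logMin_locally_uniform_convergence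
    {E : Type*} [NormedAddCommGroup E] [NormedSpace ℝ E]
    [FiniteDimensional ℝ E] [Nontrivial E]
    (K : Set (E →L[ℝ] E)) (hK : IsCompact K) :
    Tendsto
      (fun h : ℝ => ⨆ A : K,
        |(minExp ((1 : E →L[ℝ] E) + h • (A : E →L[ℝ] E)) - 1) / h - logMin (A : E →L[ℝ] E)|)
      (𝓝[>] (0 : ℝ)) (𝓝 0) := by
  classical
  rcases K.eq_empty_or_nonempty with rfl | ⟨A₀, hA₀⟩
  · have : ∀ h : ℝ, (⨆ A : (∅ : Set (E →L[ℝ] E)),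
        |(minExp ((1 : E →L[ℝ] E) + h • (A : E →L[ℝ] E)) - 1) / h - logMin (A : E →L[ℝ] E)|) = 0 := by
      intro h
      exact Real.iSup_of_isEmpty _
    simp only [this]
    exact tendsto_const_nhds
  rw [Metric.tendsto_nhds]
  intro ε hε
  have hε8 : 0 < ε / 8 := by positivity
  obtain ⟨t, htK, hcover⟩ := hK.elim_nhds_subcover (fun A => Metric.ball A (ε/8))
    (fun A _ => Metric.ball_mem_nhds _ hε8)
  have hev1 : ∀ᶠ h in 𝓝[>] (0:ℝ), ∀ A ∈ t, |phi A h - LL A| < ε/8 := by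
    rw [eventually_all_finset]
    intro A _
    have h1 : Tendsto (fun h => phi A h - LL A) (𝓝[>] (0:ℝ)) (𝓝 0) := by
      simpa using (phi_tendsto A).sub (tendsto_const_nhds (x := LL A))
    have := h1.eventually (eventually_abs_sub_lt 0 hε8)
    simpa using this
  filter_upwards [hev1, eventually_mem_nhdsWithin] with h h1 hh
  have hh : (0:ℝ) < h := hh
  have bound : ∀ B : K, |phi (B : E →L[ℝ] E) h - LL (B : E →L[ℝ] E)| ≤ ε/2 := by
    rintro ⟨B, hB⟩
    obtain ⟨A, hAt, hBA⟩ := Set.mem_iUnion₂.1 (hcover hB)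
    have hdist : ‖B - A‖ < ε/8 := by
      rw [← dist_eq_norm]; exact hBA
    have h0 : 0 ≤ phi B h - LL B := sub_nonneg.2 (LL_le_phi hh)
    have hphil := phi_lip (A := B) (B := A) (hh := hh)
    have hLl := LL_lip B A
    have hA1 := h1 A hAt
    rw [abs_of_nonneg h0]
    have e1 := (abs_sub_le_iff.1 hphil).1
    have e2 := (abs_sub_le_iff.1 hLl).2
    have e3 := (abs_le.1 hA1.le).2
    have e4 := (abs_le.1 hA1.le).1
    linarith
  have hbdd : BddAbove (Set.range fun B : K =>
      |phi (B : E →L[ℝ] E) h - LL (B : E →L[ℝ] E)|) := by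
    refine ⟨ε/2, ?_⟩
    rintro x ⟨B, rfl⟩
    exact bound B
  haveI : Nonempty K := ⟨⟨A₀, hA₀⟩⟩
  have hsup_le : (⨆ B : K, |phi (B : E →L[ℝ] E) h - LL (B : E →L[ℝ] E)|) ≤ ε/2 :=
    ciSup_le bound
  have hsup_nonneg : 0 ≤ ⨆ B : K, |phi (B : E →L[ℝ] E) h - LL (B : E →L[ℝ] E)| :=
    le_trans (abs_nonneg _) (le_ciSup hbdd ⟨A₀, hA₀⟩)
  have goal_eq : (⨆ A : K,
      |(minExp ((1 : E →L[ℝ] E) + h • (A : E →L[ℝ] E)) - 1) / h - logMin (A : E →L[ℝ] E)|)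
      = ⨆ B : K, |phi (B : E →L[ℝ] E) h - LL (B : E →L[ℝ] E)| := by
    congr 1
    funext B
    rw [logMin_eq]
    rfl
  rw [Real.dist_eq, sub_zero, goal_eq, abs_of_nonneg hsup_nonneg]
  linarith
end

section
/- Consider the autonomous ODE x′ = f(x) on ℝⁿ with the Euclidean norm, where f : ℝⁿ → ℝⁿ is C¹. Let x(t) and y(t), for t ∈ [0,T], be two solutions, and let W ⊆ ℝⁿ be a set such that for each t ∈ [0,T] the straight-line segment connecting x(t) and y(t) is contained in W. Let m ∈ ℝ be such that ⟨Df(w)v, v⟩ ≥ m‖v‖² for all w ∈ W and v ∈ ℝⁿ (i.e., the Euclidean logarithmic minimum of Df is at least m on W). Then for all t ∈ [0,T], ‖x(t) − y(t)‖ ≥ exp(mt)·‖x(0) − y(0)‖. -/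
open Filter Topology
open scoped InnerProductSpace

private lemma seg_inner_ge {n : ℕ}
    (f : EuclideanSpace ℝ (Fin n) → EuclideanSpace ℝ (Fin n))
    (hf : ContDiff ℝ 1 f)
    (W : Set (EuclideanSpace ℝ (Fin n))) (m : ℝ)
    (hm : ∀ w ∈ W, ∀ v : EuclideanSpace ℝ (Fin n),
      m * ‖v‖ ^ 2 ≤ ⟪fderiv ℝ f w v, v⟫_ℝ)
    (a b : EuclideanSpace ℝ (Fin n)) (hseg : segment ℝ a b ⊆ W) :
    m * ‖a - b‖ ^ 2 ≤ ⟪f a - f b, a - b⟫_ℝ := by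
  set v := a - b with hv
  set c : ℝ → EuclideanSpace ℝ (Fin n) := fun s => b + s • v with hc
  have hfd : Differentiable ℝ f := hf.differentiable one_ne_zero
  have hcd : ∀ s : ℝ, HasDerivAt c v s := by
    intro s
    simpa [hc] using ((hasDerivAt_id s).smul_const v).const_add b
  have hφd : ∀ s : ℝ, HasDerivAt (fun s => ⟪f (c s), v⟫_ℝ - s * (m * ‖v‖ ^ 2))
      (⟪fderiv ℝ f (c s) v, v⟫_ℝ - m * ‖v‖ ^ 2) s := by
    intro s
    have h1 : HasDerivAt (fun s => f (c s)) (fderiv ℝ f (c s) v) s :=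
      (hfd (c s)).hasFDerivAt.comp_hasDerivAt s (hcd s)
    have h2 := (h1.inner ℝ (hasDerivAt_const s v))
    rw [inner_zero_right, zero_add] at h2
    have h3 : HasDerivAt (fun s : ℝ => s * (m * ‖v‖ ^ 2)) (m * ‖v‖ ^ 2) s := by
      simpa using (hasDerivAt_id s).mul_const (m * ‖v‖ ^ 2)
    exact h2.sub h3
  have hcs : ∀ s ∈ Set.Icc (0:ℝ) 1, c s ∈ W := by
    intro s hs
    apply hseg
    rw [segment_symm, segment_eq_image']
    exact ⟨s, hs, by simp [hc, hv]⟩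
  have hmono : MonotoneOn (fun s => ⟪f (c s), v⟫_ℝ - s * (m * ‖v‖ ^ 2))
      (Set.Icc (0:ℝ) 1) := by
    apply monotoneOn_of_deriv_nonneg (convex_Icc 0 1)
    · exact fun s _ => ((hφd s).continuousAt).continuousWithinAt
    · intro s _
      exact (hφd s).differentiableAt.differentiableWithinAt
    · intro s hs
      rw [interior_Icc] at hs
      rw [(hφd s).deriv]
      have := hm (c s) (hcs s ⟨hs.1.le, hs.2.le⟩) v
      linarith
  have h01 := hmono (Set.left_mem_Icc.2 one_pos.le) (Set.right_mem_Icc.2 one_pos.le) one_pos.le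
  have hc0 : c 0 = b := by simp [hc]
  have hc1 : c 1 = a := by simp [hc, hv]
  simp only [hc0, hc1, zero_mul, sub_zero, one_mul] at h01
  have hsub : ⟪f a - f b, v⟫_ℝ = ⟪f a, v⟫_ℝ - ⟪f b, v⟫_ℝ := inner_sub_left _ _ _
  rw [hsub]
  linarith

/-- Logarithmic minimum bound for ODEs (lower bound on the distance between two solutions):
if the Euclidean logarithmic minimum of `Df` is at least `m` on a set `W` containing the
segments between the two solutions, then the distance between the solutions shrinks at most
like `exp(m t)`. -/
theorem dist_solutions_ge_exp_logMin {n : ℕ}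
    (f : EuclideanSpace ℝ (Fin n) → EuclideanSpace ℝ (Fin n))
    (hf : ContDiff ℝ 1 f)
    (T : ℝ)
    (x y : ℝ → EuclideanSpace ℝ (Fin n))
    (hx : ∀ t ∈ Set.Icc (0 : ℝ) T, HasDerivAt x (f (x t)) t)
    (hy : ∀ t ∈ Set.Icc (0 : ℝ) T, HasDerivAt y (f (y t)) t)
    (W : Set (EuclideanSpace ℝ (Fin n)))
    (hW : ∀ t ∈ Set.Icc (0 : ℝ) T, segment ℝ (x t) (y t) ⊆ W)
    (m : ℝ)
    (hm : ∀ w ∈ W, ∀ v : EuclideanSpace ℝ (Fin n),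
      m * ‖v‖ ^ 2 ≤ ⟪fderiv ℝ f w v, v⟫_ℝ) :
    ∀ t ∈ Set.Icc (0 : ℝ) T,
      Real.exp (m * t) * ‖x 0 - y 0‖ ≤ ‖x t - y t‖ := by
  intro t ht
  set u : ℝ → EuclideanSpace ℝ (Fin n) := fun s => x s - y s with hu
  set g : ℝ → ℝ := fun s => ⟪u s, u s⟫_ℝ with hg
  have hud : ∀ s ∈ Set.Icc (0:ℝ) T, HasDerivAt u (f (x s) - f (y s)) s :=
    fun s hs => (hx s hs).sub (hy s hs)
  have hgd : ∀ s ∈ Set.Icc (0:ℝ) T,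
      HasDerivAt g (2 * ⟪f (x s) - f (y s), u s⟫_ℝ) s := by
    intro s hs
    have h1 := (hud s hs).inner ℝ (hud s hs)
    have e : ⟪u s, f (x s) - f (y s)⟫_ℝ + ⟪f (x s) - f (y s), u s⟫_ℝ
        = 2 * ⟪f (x s) - f (y s), u s⟫_ℝ := by
      rw [real_inner_comm]; ring
    exact e ▸ h1
  have hhd : ∀ s ∈ Set.Icc (0:ℝ) T,
      HasDerivAt (fun s => Real.exp (-(2*m) * s) * g s)
        (Real.exp (-(2*m)*s) * (-(2*m)) * g s
          + Real.exp (-(2*m)*s) * (2 * ⟪f (x s) - f (y s), u s⟫_ℝ)) s := by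
    intro s hs
    have he : HasDerivAt (fun s : ℝ => Real.exp (-(2*m)*s)) (Real.exp (-(2*m)*s) * (-(2*m))) s :=
      by simpa using ((hasDerivAt_id' s).const_mul (-(2*m))).exp
    exact he.mul (hgd s hs)
  have hmono : MonotoneOn (fun s => Real.exp (-(2*m) * s) * g s) (Set.Icc (0:ℝ) T) := by
    apply monotoneOn_of_deriv_nonneg (convex_Icc 0 T)
    · exact fun s hs => ((hhd s hs).continuousAt).continuousWithinAt
    · intro s hs
      rw [interior_Icc] at hs
      exact (hhd s ⟨hs.1.le, hs.2.le⟩).differentiableAt.differentiableWithinAt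
    · intro s hs
      rw [interior_Icc] at hs
      have hs' : s ∈ Set.Icc (0:ℝ) T := ⟨hs.1.le, hs.2.le⟩
      rw [(hhd s hs').deriv]
      have hkey : m * ‖u s‖ ^ 2 ≤ ⟪f (x s) - f (y s), u s⟫_ℝ :=
        seg_inner_ge f hf W m hm (x s) (y s) (hW s hs')
      have hgval : g s = ‖u s‖ ^ 2 := real_inner_self_eq_norm_sq (u s)
      have hepos : (0:ℝ) < Real.exp (-(2*m)*s) := Real.exp_pos _
      rw [hgval]
      nlinarith
  have h0t := hmono (Set.left_mem_Icc.2 (ht.1.trans ht.2)) ht ht.1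
  simp only [mul_zero, Real.exp_zero, one_mul] at h0t
  have hg0 : g 0 = ‖u 0‖ ^ 2 := real_inner_self_eq_norm_sq (u 0)
  have hgt : g t = ‖u t‖ ^ 2 := real_inner_self_eq_norm_sq (u t)
  rw [hg0, hgt] at h0t
  have hsq : (Real.exp (m * t) * ‖x 0 - y 0‖) ^ 2 ≤ ‖x t - y t‖ ^ 2 := by
    have h1 : Real.exp (m*t) ^ 2 = Real.exp (2*m*t) := by
      rw [← Real.exp_nat_mul]; ring_nf
    have h2 : Real.exp (2*m*t) * Real.exp (-(2*m)*t) = 1 := by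
      rw [← Real.exp_add, show 2*m*t + -(2*m)*t = 0 by ring, Real.exp_zero]
    have h3 : Real.exp (2*m*t) * ‖u 0‖^2 ≤ Real.exp (2*m*t) * (Real.exp (-(2*m)*t) * ‖u t‖^2) :=
      mul_le_mul_of_nonneg_left h0t (Real.exp_pos _).le
    rw [← mul_assoc, h2, one_mul] at h3
    calc (Real.exp (m * t) * ‖x 0 - y 0‖) ^ 2
        = Real.exp (2*m*t) * ‖u 0‖^2 := by rw [mul_pow, h1]
      _ ≤ ‖u t‖^2 := h3
      _ = ‖x t - y t‖^2 := rfl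
  exact le_of_pow_le_pow_left₀ two_ne_zero (norm_nonneg _) hsq
end

section
/- Let A be a real n×n matrix, and equip ℝⁿ with the Euclidean norm and matrices with the induced operator norm. Then lim_{h→0⁺} (m(I + hA) − 1)/h exists and equals the smallest eigenvalue of the symmetric matrix (A + Aᵀ)/2, where m(B) := inf_{‖z‖=1} ‖Bz‖. -/
open Filter Topology Matrix

private lemma aux_slope (a c : ℝ) :
    Tendsto (fun h : ℝ => (Real.sqrt (1 + 2 * a * h + c * h ^ 2) - 1) / h)
      (𝓝[>] (0 : ℝ)) (𝓝 a) := by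
  have hp : HasDerivAt (fun h : ℝ => 1 + 2 * a * h + c * h ^ 2) (2 * a) 0 := by
    have h1 : HasDerivAt (fun h : ℝ => 1 + 2 * a * h + c * h ^ 2)
        (0 + 2 * a * 1 + c * (↑2 * 0 ^ 1)) 0 :=
      (((hasDerivAt_const (0:ℝ) (1:ℝ)).add ((hasDerivAt_id (0:ℝ)).const_mul (2*a))).add
        ((hasDerivAt_pow 2 (0:ℝ)).const_mul c))
    simpa using h1
  have hs : HasDerivAt (fun h : ℝ => Real.sqrt (1 + 2 * a * h + c * h ^ 2))
      (2 * a / (2 * Real.sqrt (1 + 2 * a * 0 + c * 0 ^ 2))) 0 := hp.sqrt (by norm_num)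
  rw [show (2 * a / (2 * Real.sqrt (1 + 2 * a * 0 + c * 0 ^ 2))) = a by
    norm_num] at hs
  have h2 := (hasDerivAt_iff_tendsto_slope.mp hs).mono_left
    (nhdsWithin_mono _ fun x hx => ne_of_gt hx)
  refine h2.congr fun h => ?_
  rw [slope_def_field]
  norm_num

set_option maxHeartbeats 1000000 in
open RealInnerProductSpace in
/-- For the Euclidean norm, the logarithmic minimum
`m_l(A) = lim_{h→0⁺} (m(I + hA) - 1)/h` exists and equals the smallest eigenvalue of the
symmetric matrix `(A + Aᵀ)/2`. -/
theorem eucl_logMin_eq_min_eigenvalue {n : ℕ} [NeZero n]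
    (A : Matrix (Fin n) (Fin n) ℝ)
    (hS : (((1 : ℝ) / 2) • (A + Aᵀ)).IsHermitian) :
    Tendsto
      (fun h : ℝ =>
        (minExp (Matrix.toEuclideanCLM (𝕜 := ℝ) (1 + h • A) :
            EuclideanSpace ℝ (Fin n) →L[ℝ] EuclideanSpace ℝ (Fin n)) - 1) / h)
      (𝓝[>] (0 : ℝ)) (𝓝 (⨅ i, hS.eigenvalues i)) := by
  haveI : Nonempty (Fin n) := ⟨⟨0, Nat.pos_of_ne_zero (NeZero.ne n)⟩⟩
  set S : Matrix (Fin n) (Fin n) ℝ := ((1:ℝ)/2) • (A + Aᵀ) with hSdef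
  set lam : ℝ := ⨅ i, hS.eigenvalues i with hlam
  set TA : EuclideanSpace ℝ (Fin n) →L[ℝ] EuclideanSpace ℝ (Fin n) :=
    Matrix.toEuclideanCLM (𝕜 := ℝ) A with hTA
  set T : EuclideanSpace ℝ (Fin n) →L[ℝ] EuclideanSpace ℝ (Fin n) :=
    Matrix.toEuclideanCLM (𝕜 := ℝ) S with hT
  have hstarS : star S = S := by
    rw [Matrix.star_eq_conjTranspose]; exact hS
  have hTsa : _root_.IsSelfAdjoint T := by
    show star T = T; rw [hT, ← map_star, hstarS]
  have hTsymm := ContinuousLinearMap.isSelfAdjoint_iff_isSymmetric.mp hTsa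
  set b := hS.eigenvectorBasis with hb
  have hTb : ∀ i, T (b i) = hS.eigenvalues i • b i := by
    intro i
    have h1 := hS.mulVec_eigenvectorBasis i
    apply PiLp.ext
    intro j
    exact congrFun h1 j
  -- quadratic form identities
  have hquad : ∀ z : EuclideanSpace ℝ (Fin n),
      ⟪z, T z⟫ = ∑ i, hS.eigenvalues i * ⟪b i, z⟫ ^ 2 := by
    intro z
    rw [← b.sum_inner_mul_inner z (T z)]
    refine Finset.sum_congr rfl fun i _ => ?_
    have hsym : ⟪T (b i), z⟫ = ⟪b i, T z⟫ := hTsymm (b i) z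
    have h2 : ⟪b i, T z⟫ = hS.eigenvalues i * ⟪b i, z⟫ := by
      rw [← hsym, hTb i, real_inner_smul_left]
    rw [h2, real_inner_comm z (b i)]; ring
  have hnorm : ∀ z : EuclideanSpace ℝ (Fin n), ‖z‖ ^ 2 = ∑ i, ⟪b i, z⟫ ^ 2 := by
    intro z
    rw [← real_inner_self_eq_norm_sq, ← b.sum_inner_mul_inner z z]
    refine Finset.sum_congr rfl fun i _ => ?_
    rw [real_inner_comm z (b i)]; ring
  have hlow : ∀ z : EuclideanSpace ℝ (Fin n), lam * ‖z‖ ^ 2 ≤ ⟪z, T z⟫ := by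
    intro z
    rw [hquad z, hnorm z, Finset.mul_sum]
    refine Finset.sum_le_sum fun i _ => ?_
    have h1 : lam ≤ hS.eigenvalues i := ciInf_le (Set.finite_range _).bddBelow i
    nlinarith [sq_nonneg (⟪b i, z⟫)]
  -- relation between T and A's quadratic form
  have hAt : star A = Aᵀ := by
    rw [Matrix.star_eq_conjTranspose]
    ext i j
    simp [Matrix.conjTranspose_apply]
  have hTA' : Matrix.toEuclideanCLM (𝕜 := ℝ) Aᵀ = star TA := by
    rw [hTA, ← map_star, hAt]
  have hAS : ∀ z : EuclideanSpace ℝ (Fin n), ⟪z, T z⟫ = ⟪z, TA z⟫ := by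
    intro z
    have hTz : T z = ((1:ℝ)/2) • (TA z + (star TA) z) := by
      have hTeq : T = ((1:ℝ)/2) • (TA + star TA) := by
        rw [hT, hSdef, _root_.map_smul, map_add, ← hTA', hTA]
      rw [hTeq]
      simp
    have hadj : ⟪z, (star TA) z⟫ = ⟪TA z, z⟫ := by
      rw [ContinuousLinearMap.star_eq_adjoint, ContinuousLinearMap.adjoint_inner_right]
    rw [hTz, real_inner_smul_right, inner_add_right, hadj, real_inner_comm (TA z) z]
    ring
  -- minimizing eigenvector
  obtain ⟨i₀, hi₀⟩ := Finite.exists_min hS.eigenvalues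
  have hlami : lam = hS.eigenvalues i₀ :=
    le_antisymm (ciInf_le (Set.finite_range _).bddBelow i₀) (le_ciInf hi₀)
  set v : EuclideanSpace ℝ (Fin n) := b i₀ with hv
  have hv1 : ‖v‖ = 1 := b.orthonormal.1 i₀
  have hvT : ⟪v, TA v⟫ = lam := by
    rw [← hAS v, hv, hTb i₀, real_inner_smul_right, real_inner_self_eq_norm_sq, hv1, hlami]
    ring
  haveI hne : Nonempty (Metric.sphere (0 : EuclideanSpace ℝ (Fin n)) 1) :=
    ⟨⟨v, by simp [hv1]⟩⟩
  set c : ℝ := ‖TA v‖ ^ 2 with hc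
  -- general expansion
  have hBz : ∀ (h : ℝ) (z : EuclideanSpace ℝ (Fin n)),
      (Matrix.toEuclideanCLM (𝕜 := ℝ) (1 + h • A)) z = z + h • TA z := by
    intro h z
    rw [map_add, _root_.map_smul, _root_.map_one, hTA]
    rfl
  have hnormsq : ∀ (h : ℝ) (z : EuclideanSpace ℝ (Fin n)),
      ‖z + h • TA z‖ ^ 2 = ‖z‖ ^ 2 + 2 * h * ⟪z, TA z⟫ + h ^ 2 * ‖TA z‖ ^ 2 := by
    intro h z
    rw [norm_add_sq_real, real_inner_smul_right, norm_smul, mul_pow, Real.norm_eq_abs, sq_abs]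
    ring
  set δ : ℝ := 1 / (2 * (|lam| + 1)) with hδ
  have hδpos : 0 < δ := by positivity
  refine tendsto_of_tendsto_of_tendsto_of_le_of_le'
    (aux_slope lam 0) (aux_slope lam c) ?_ ?_
  · -- lower bound
    filter_upwards [Ioo_mem_nhdsGT_of_mem (Set.left_mem_Ico.mpr hδpos)] with h hh
    obtain ⟨hh0, hhδ⟩ := hh
    have hpos : (0:ℝ) ≤ 1 + 2 * lam * h := by
      have h1 : |lam| * h < 1/2 := by
        rw [hδ] at hhδ
        have h2 : (|lam| + 1) * h < 1/2 := by
          rw [lt_div_iff₀ (by positivity)] at hhδ ⊢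
          linarith [hhδ]
        nlinarith [abs_nonneg lam]
      have := neg_abs_le lam
      nlinarith
    have hmlow : Real.sqrt (1 + 2 * lam * h) ≤
        minExp (Matrix.toEuclideanCLM (𝕜 := ℝ) (1 + h • A) :
          EuclideanSpace ℝ (Fin n) →L[ℝ] EuclideanSpace ℝ (Fin n)) := by
      rw [minExp]
      refine le_ciInf ?_
      rintro ⟨z, hz⟩
      have hz1 : ‖z‖ = 1 := by simpa using hz
      have h1 : 1 + 2 * lam * h ≤
          ‖(Matrix.toEuclideanCLM (𝕜 := ℝ) (1 + h • A)) z‖ ^ 2 := by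
        rw [hBz h z, hnormsq h z, hz1]
        have h3 := hlow z
        rw [hz1, hAS z] at h3
        nlinarith [sq_nonneg ‖TA z‖]
      calc Real.sqrt (1 + 2 * lam * h) ≤
          Real.sqrt (‖(Matrix.toEuclideanCLM (𝕜 := ℝ) (1 + h • A)) z‖ ^ 2) :=
            Real.sqrt_le_sqrt h1
        _ = _ := Real.sqrt_sq (norm_nonneg _)
    rw [zero_mul, add_zero]
    exact (div_le_div_iff_of_pos_right hh0).mpr (sub_le_sub_right hmlow 1)
  · -- upper bound
    filter_upwards [self_mem_nhdsWithin] with h hh0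
    replace hh0 : (0:ℝ) < h := hh0
    have hBv : ‖(Matrix.toEuclideanCLM (𝕜 := ℝ) (1 + h • A)) v‖ =
        Real.sqrt (1 + 2 * lam * h + c * h ^ 2) := by
      rw [← Real.sqrt_sq (norm_nonneg ((Matrix.toEuclideanCLM (𝕜 := ℝ) (1 + h • A)) v))]
      congr 1
      rw [hBz h v, hnormsq h v, hv1, hvT, hc]
      ring
    have hmup : minExp (Matrix.toEuclideanCLM (𝕜 := ℝ) (1 + h • A) :
          EuclideanSpace ℝ (Fin n) →L[ℝ] EuclideanSpace ℝ (Fin n)) ≤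
        Real.sqrt (1 + 2 * lam * h + c * h ^ 2) := by
      rw [minExp, ← hBv]
      exact ciInf_le ⟨0, by rintro x ⟨z, rfl⟩; exact norm_nonneg _⟩
        (⟨v, by simp [hv1]⟩ : Metric.sphere (0 : EuclideanSpace ℝ (Fin n)) 1)
    exact (div_le_div_iff_of_pos_right hh0).mpr (sub_le_sub_right hmup 1)
end

section
/- Equip ℝⁿ with the Euclidean norm and real n×n matrices with the induced operator norm. Let W be a compact set of real n×n matrices and h₀ > 0. Then there exists a constant M = M(h₀, W) such that for all A ∈ W and all h ∈ (0, h₀], |‖I + hA‖ − 1 − h·l(A)| ≤ M h², where l(A) is the largest eigenvalue of (A + Aᵀ)/2. -/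
open Filter Topology Matrix

section Aux

variable {n : ℕ}

local notation "⟪" x ", " y "⟫" => @inner ℝ _ _ x y

lemma toEuclideanCLM_coe_apply (B : Matrix (Fin n) (Fin n) ℝ) (x : EuclideanSpace ℝ (Fin n)) :
    ⇑(Matrix.toEuclideanCLM (𝕜 := ℝ) B x) = B *ᵥ ⇑x := rfl

lemma toEuclideanCLM_eigen {S : Matrix (Fin n) (Fin n) ℝ} (hs : S.IsHermitian) (i : Fin n) :
    Matrix.toEuclideanCLM (𝕜 := ℝ) S (hs.eigenvectorBasis i)
      = hs.eigenvalues i • hs.eigenvectorBasis i := by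
  ext j
  have := congrFun (hs.mulVec_eigenvectorBasis i) j
  simpa [toEuclideanCLM_coe_apply] using this

lemma inner_toEuclideanCLM_symm {S : Matrix (Fin n) (Fin n) ℝ} (hs : S.IsHermitian)
    (x y : EuclideanSpace ℝ (Fin n)) :
    ⟪Matrix.toEuclideanCLM (𝕜 := ℝ) S x, y⟫ = ⟪x, Matrix.toEuclideanCLM (𝕜 := ℝ) S y⟫ := by
  have hsa : ContinuousLinearMap.adjoint (Matrix.toEuclideanCLM (𝕜 := ℝ) S)
      = Matrix.toEuclideanCLM (𝕜 := ℝ) S := by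
    have h1 := map_star (Matrix.toEuclideanCLM (𝕜 := ℝ) (n := Fin n)) S
    rw [Matrix.star_eq_conjTranspose, hs.eq, ContinuousLinearMap.star_eq_adjoint] at h1
    exact h1.symm
  have h2 := ContinuousLinearMap.adjoint_inner_left (Matrix.toEuclideanCLM (𝕜 := ℝ) S) y x
  rw [hsa] at h2
  exact h2

/-- Rayleigh-type bound: `⟪x, S x⟫ ≤ (⨆ i, λᵢ) * ‖x‖²` for Hermitian `S`. -/
lemma rayleigh_le_iSup [NeZero n] {S : Matrix (Fin n) (Fin n) ℝ} (hs : S.IsHermitian)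
    (x : EuclideanSpace ℝ (Fin n)) :
    ⟪x, Matrix.toEuclideanCLM (𝕜 := ℝ) S x⟫ ≤ (⨆ i, hs.eigenvalues i) * ‖x‖ ^ 2 := by
  classical
  set b := hs.eigenvectorBasis
  set lam := ⨆ i, hs.eigenvalues i with hlam
  have hle : ∀ i, hs.eigenvalues i ≤ lam := fun i =>
    le_ciSup (Set.Finite.bddAbove (Set.finite_range _)) i
  have key : ⟪x, Matrix.toEuclideanCLM (𝕜 := ℝ) S x⟫
      = ∑ i, hs.eigenvalues i * (⟪x, b i⟫ * ⟪x, b i⟫) := by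
    rw [← b.sum_inner_mul_inner x (Matrix.toEuclideanCLM (𝕜 := ℝ) S x)]
    refine Finset.sum_congr rfl fun i _ => ?_
    rw [← inner_toEuclideanCLM_symm hs, toEuclideanCLM_eigen hs i,
      real_inner_smul_left, real_inner_comm (b i) x]
    ring
  have parseval : ∑ i, ⟪x, b i⟫ * ⟪x, b i⟫ = ‖x‖ ^ 2 := by
    have := b.sum_inner_mul_inner x x
    rw [real_inner_self_eq_norm_sq] at this
    rw [← this]
    exact Finset.sum_congr rfl fun i _ => by rw [real_inner_comm (b i) x]
  calc ⟪x, Matrix.toEuclideanCLM (𝕜 := ℝ) S x⟫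
      = ∑ i, hs.eigenvalues i * (⟪x, b i⟫ * ⟪x, b i⟫) := key
    _ ≤ ∑ i, lam * (⟪x, b i⟫ * ⟪x, b i⟫) := by
        refine Finset.sum_le_sum fun i _ => ?_
        exact mul_le_mul_of_nonneg_right (hle i) (mul_self_nonneg _)
    _ = lam * ‖x‖ ^ 2 := by rw [← Finset.mul_sum, parseval]

end Aux

set_option maxHeartbeats 1000000
/-- Quadratic error bound for the logarithmic norm on a compact set of matrices:
`‖I + hA‖ = 1 + h·l(A) + O(h²)` uniformly for `A` in a compact set `W` and `h ∈ (0, h₀]`,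
where `l(A)` is the largest eigenvalue of `(A + Aᵀ)/2`. -/
theorem logNorm_quadratic_error_on_compact {n : ℕ} [NeZero n]
    (W : Set (Matrix (Fin n) (Fin n) ℝ)) (hW : IsCompact W)
    (h₀ : ℝ) (hh₀ : 0 < h₀)
    (hS : ∀ A : Matrix (Fin n) (Fin n) ℝ, (((1 : ℝ) / 2) • (A + Aᵀ)).IsHermitian) :
    ∃ M : ℝ, ∀ A ∈ W, ∀ h ∈ Set.Ioc (0 : ℝ) h₀,
      |‖(Matrix.toEuclideanCLM (𝕜 := ℝ) (1 + h • A) :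
            EuclideanSpace ℝ (Fin n) →L[ℝ] EuclideanSpace ℝ (Fin n))‖
          - 1 - h * (⨆ i, (hS A).eigenvalues i)| ≤ M * h ^ 2 := by
  classical
  set T := Matrix.toEuclideanCLM (𝕜 := ℝ) (n := Fin n) with hT
  -- the map A ↦ T A is linear, hence continuous in finite dimension
  have hcont : Continuous fun A : Matrix (Fin n) (Fin n) ℝ =>
      (T A : EuclideanSpace ℝ (Fin n) →L[ℝ] EuclideanSpace ℝ (Fin n)) := by
    exact LinearMap.continuous_of_finiteDimensional
      { toFun := fun A => T A
        map_add' := fun A B => map_add T A B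
        map_smul' := fun c A => map_smul T c A }
  obtain ⟨C, hC⟩ := hW.exists_bound_of_continuousOn hcont.continuousOn
  set K := max C 0 with hK
  have hK0 : 0 ≤ K := le_max_right _ _
  have hKb : ∀ A ∈ W, ‖T A‖ ≤ K := fun A hA => le_trans (hC A hA) (le_max_left _ _)
  refine ⟨K ^ 2 / 2, fun A hA h hh => ?_⟩
  obtain ⟨hhpos, hhle⟩ := hh
  set S := ((1 : ℝ) / 2) • (A + Aᵀ) with hSdef
  set lam := ⨆ i, (hS A).eigenvalues i with hlam
  have hTA : ‖T A‖ ≤ K := hKb A hA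
  -- ⟪x, T A x⟫ = ⟪x, T S x⟫
  have hsym : ∀ x : EuclideanSpace ℝ (Fin n),
      @inner ℝ _ _ x (T A x) = @inner ℝ _ _ x (T S x) := by
    intro x
    have hstar : star A = Aᵀ := by
      simp [Matrix.star_eq_conjTranspose, Matrix.conjTranspose_eq_transpose_of_trivial]
    have hadj : (T Aᵀ : EuclideanSpace ℝ (Fin n) →L[ℝ] EuclideanSpace ℝ (Fin n))
        = ContinuousLinearMap.adjoint (T A) := by
      rw [← ContinuousLinearMap.star_eq_adjoint, ← map_star T A, hstar]
    have h1 : T S = ((1 : ℝ) / 2) • (T A + T Aᵀ) := by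
      rw [hSdef, _root_.map_smul, map_add]
    rw [h1]
    simp only [ContinuousLinearMap.smul_apply, ContinuousLinearMap.add_apply,
      real_inner_smul_right, inner_add_right, hadj, ContinuousLinearMap.adjoint_inner_right]
    rw [real_inner_comm ((T A) x) x]
    ring
  -- eigenvector for the top eigenvalue
  obtain ⟨i₀, hi₀⟩ := exists_eq_ciSup_of_finite (f := (hS A).eigenvalues)
  set v : EuclideanSpace ℝ (Fin n) := (hS A).eigenvectorBasis i₀ with hv
  have hvnorm : ‖v‖ = 1 := (hS A).eigenvectorBasis.orthonormal.1 i₀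
  have hTv : T S v = lam • v := by
    rw [toEuclideanCLM_eigen (hS A) i₀, hi₀]
  have hinner_v : @inner ℝ _ _ v (T A v) = lam := by
    rw [hsym v, hTv, real_inner_smul_right, real_inner_self_eq_norm_sq, hvnorm]
    ring
  -- |lam| ≤ K
  have habs : |lam| ≤ K := by
    rw [← hinner_v]
    have h2 : ‖(T A) v‖ ≤ K := by
      calc ‖(T A) v‖ ≤ ‖T A‖ * ‖v‖ := (T A).le_opNorm v
        _ = ‖T A‖ := by rw [hvnorm, mul_one]
        _ ≤ K := hTA
    calc |@inner ℝ _ _ v (T A v)| ≤ ‖v‖ * ‖(T A) v‖ := abs_real_inner_le_norm _ _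
      _ = ‖(T A) v‖ := by rw [hvnorm, one_mul]
      _ ≤ K := h2
  have hlamK : lam ≤ K := le_trans (le_abs_self _) habs
  have hlamK' : -K ≤ lam := neg_le_of_abs_le habs
  -- the operator in question
  have hTone : (T (1 + h • A) : EuclideanSpace ℝ (Fin n) →L[ℝ] EuclideanSpace ℝ (Fin n))
      = 1 + h • T A := by rw [map_add, _root_.map_one, _root_.map_smul]
  -- lower bound
  have hlower : 1 + h * lam ≤ ‖T (1 + h • A)‖ := by
    have h1 : @inner ℝ _ _ v ((T (1 + h • A)) v) = 1 + h * lam := by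
      rw [hTone]
      simp only [ContinuousLinearMap.add_apply, ContinuousLinearMap.one_apply,
        ContinuousLinearMap.smul_apply, inner_add_right, real_inner_smul_right]
      rw [hinner_v, real_inner_self_eq_norm_sq, hvnorm]
      ring
    calc 1 + h * lam = @inner ℝ _ _ v ((T (1 + h • A)) v) := h1.symm
      _ ≤ ‖v‖ * ‖(T (1 + h • A)) v‖ := real_inner_le_norm _ _
      _ ≤ ‖v‖ * (‖T (1 + h • A)‖ * ‖v‖) :=
          mul_le_mul_of_nonneg_left ((T _).le_opNorm v) (norm_nonneg _)
      _ = ‖T (1 + h • A)‖ := by rw [hvnorm]; ring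
  -- upper bound
  set D := 1 + 2 * h * lam + h ^ 2 * K ^ 2 with hD
  have hlam2 : lam ^ 2 ≤ K ^ 2 := sq_le_sq' hlamK' hlamK
  have hD0 : 0 ≤ D := by nlinarith [sq_nonneg (1 + h * lam), sq_nonneg h, hlam2]
  have hupper : ‖T (1 + h • A)‖ ≤ Real.sqrt D := by
    refine ContinuousLinearMap.opNorm_le_bound _ (Real.sqrt_nonneg D) fun x => ?_
    have hnorm_sq : ‖(T (1 + h • A)) x‖ ^ 2 ≤ D * ‖x‖ ^ 2 := by
      have hray := rayleigh_le_iSup (hS A) x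
      rw [← hlam] at hray
      have hAx : ‖T A x‖ ≤ K * ‖x‖ := le_trans ((T A).le_opNorm x)
        (mul_le_mul_of_nonneg_right hTA (norm_nonneg _))
      have hAx2 : ‖T A x‖ ^ 2 ≤ K ^ 2 * ‖x‖ ^ 2 := by nlinarith [norm_nonneg (T A x)]
      have hexp : ‖(T (1 + h • A)) x‖ ^ 2
          = ‖x‖ ^ 2 + 2 * h * @inner ℝ _ _ x (T A x) + h ^ 2 * ‖T A x‖ ^ 2 := by
        rw [hTone]
        simp only [ContinuousLinearMap.add_apply, ContinuousLinearMap.one_apply,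
          ContinuousLinearMap.smul_apply]
        rw [norm_add_sq_real, real_inner_smul_right, norm_smul, Real.norm_eq_abs,
          abs_of_pos hhpos, mul_pow]
        ring
      rw [hexp, hsym x]
      have := hray
      nlinarith [hhpos.le, sq_nonneg h]
    calc ‖(T (1 + h • A)) x‖ = Real.sqrt (‖(T (1 + h • A)) x‖ ^ 2) := by
          rw [Real.sqrt_sq (norm_nonneg _)]
      _ ≤ Real.sqrt (D * ‖x‖ ^ 2) := Real.sqrt_le_sqrt hnorm_sq
      _ = Real.sqrt D * ‖x‖ := by
          rw [Real.sqrt_mul hD0, Real.sqrt_sq (norm_nonneg _)]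
  have hsqrt : Real.sqrt D ≤ 1 + h * lam + K ^ 2 / 2 * h ^ 2 := by
    nlinarith [Real.sq_sqrt hD0, Real.sqrt_nonneg D, sq_nonneg (Real.sqrt D - 1)]
  have hfin : ‖T (1 + h • A)‖ ≤ 1 + h * lam + K ^ 2 / 2 * h ^ 2 := le_trans hupper hsqrt
  rw [abs_le]
  constructor
  · nlinarith [sq_nonneg h, hK0]
  · nlinarith
end

section
/- Equip ℝⁿ with the Euclidean norm and real n×n matrices with the induced operator norm. Let W be a compact set of real n×n matrices and h₀ > 0. Then there exists a constant M = M(h₀, W) such that for all A ∈ W and all h ∈ (0, h₀], |m(I + hA) − 1 − h·m_l(A)| ≤ M h², where m(B) := inf_{‖z‖=1}‖Bz‖ and m_l(A) is the smallest eigenvalue of (A + Aᵀ)/2. -/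
open Filter Topology Matrix

section Aux

open RealInnerProductSpace

set_option maxHeartbeats 1000000

variable {n : ℕ}

local notation "E" => EuclideanSpace ℝ (Fin n)

private lemma real_est (C h h₀ f g a q : ℝ) (hC1 : 1 ≤ C) (hh : 0 < h) (hhh : h ≤ h₀)
    (hf0 : 0 ≤ f) (ha0 : 0 ≤ a) (haC : a ≤ C) (hqa : |q| ≤ a)
    (hg : g = 1 + h * q) (hfsq : f ^ 2 = 1 + 2 * (h * q) + h ^ 2 * a ^ 2)
    (hf_lb : 1 - h * a ≤ f) :
    |f - g| ≤ (8 * C ^ 2 * (1 + h₀ * C) + 2 * C ^ 2) * h ^ 2 := by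
  have hC0 : (0 : ℝ) < C := lt_of_lt_of_le one_pos hC1
  have hh₀0 : 0 < h₀ := lt_of_lt_of_le hh hhh
  have hq_abs : |q| ≤ C := le_trans hqa haC
  have hq1 : -C ≤ q := by
    have := neg_abs_le q; linarith
  have hq2 : q ≤ C := le_trans (le_abs_self q) hq_abs
  have key : f ^ 2 - g ^ 2 = h ^ 2 * (a ^ 2 - q ^ 2) := by rw [hfsq, hg]; ring
  have haq0 : 0 ≤ a ^ 2 - q ^ 2 := by nlinarith [abs_nonneg q, le_abs_self q, neg_abs_le q]
  have haqC : a ^ 2 - q ^ 2 ≤ 2 * C ^ 2 := by nlinarith [sq_nonneg q]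
  rcases le_or_gt (h * C) (1 / 2) with hc | hc
  · have hha : h * a ≤ h * C := mul_le_mul_of_nonneg_left haC (le_of_lt hh)
    have hfge : 1 / 2 ≤ f := by linarith
    have hgge : 1 / 2 ≤ g := by
      have : h * (-C) ≤ h * q := mul_le_mul_of_nonneg_left hq1 (le_of_lt hh)
      rw [hg]; nlinarith
    have habs : |f - g| * (f + g) = |f ^ 2 - g ^ 2| := by
      rw [← abs_of_nonneg (by linarith : (0:ℝ) ≤ f + g), ← abs_mul]
      ring_nf
    have h2 : |f ^ 2 - g ^ 2| ≤ 2 * C ^ 2 * h ^ 2 := by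
      rw [key, abs_of_nonneg (by positivity)]
      nlinarith [sq_nonneg h]
    have h3 : |f - g| ≤ |f - g| * (f + g) := by nlinarith [abs_nonneg (f - g)]
    have h4 : |f - g| ≤ 2 * C ^ 2 * h ^ 2 := by
      calc |f - g| ≤ |f - g| * (f + g) := h3
      _ = |f ^ 2 - g ^ 2| := habs
      _ ≤ 2 * C ^ 2 * h ^ 2 := h2
    have hnn : 0 ≤ 8 * C ^ 2 * (1 + h₀ * C) * h ^ 2 := by positivity
    have expand : (8 * C ^ 2 * (1 + h₀ * C) + 2 * C ^ 2) * h ^ 2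
        = 8 * C ^ 2 * (1 + h₀ * C) * h ^ 2 + 2 * C ^ 2 * h ^ 2 := by ring
    linarith
  · have h4 : 1 ≤ 4 * h ^ 2 * C ^ 2 := by nlinarith [sq_nonneg (2 * h * C - 1)]
    have hfle : f ≤ 1 + h * C := by
      have hsq : f ^ 2 ≤ (1 + h * C) ^ 2 := by
        nlinarith [mul_le_mul_of_nonneg_left hq2 (le_of_lt hh),
          mul_le_mul haC haC ha0 (le_of_lt hC0), sq_nonneg h, mul_pos hh hh]
      nlinarith [sq_nonneg (f + (1 + h * C))]
    have hgabs : |g| ≤ 1 + h * C := by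
      rw [hg, abs_le]
      constructor <;> nlinarith
    have h5 : |f - g| ≤ 2 * (1 + h₀ * C) := by
      have hC' : h * C ≤ h₀ * C := mul_le_mul_of_nonneg_right hhh (le_of_lt hC0)
      calc |f - g| ≤ |f| + |g| := abs_sub _ _
      _ = f + |g| := by rw [abs_of_nonneg hf0]
      _ ≤ (1 + h * C) + (1 + h * C) := by linarith
      _ ≤ 2 * (1 + h₀ * C) := by linarith
    have h6 : 2 * (1 + h₀ * C) ≤ 8 * C ^ 2 * (1 + h₀ * C) * h ^ 2 := by
      have hpos : 0 < 1 + h₀ * C := by positivity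
      nlinarith
    calc |f - g| ≤ 2 * (1 + h₀ * C) := h5
    _ ≤ 8 * C ^ 2 * (1 + h₀ * C) * h ^ 2 := h6
    _ ≤ (8 * C ^ 2 * (1 + h₀ * C) + 2 * C ^ 2) * h ^ 2 := by nlinarith [sq_nonneg h]

private lemma pointwise_est (B : E →L[ℝ] E) (C h h₀ : ℝ) (hC1 : 1 ≤ C) (hB : ‖B‖ ≤ C)
    (hh : 0 < h) (hhh : h ≤ h₀) (z : E) (hz : ‖z‖ = 1) :
    |‖z + h • B z‖ - (1 + h * ⟪B z, z⟫)| ≤ (8 * C ^ 2 * (1 + h₀ * C) + 2 * C ^ 2) * h ^ 2 := by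
  have hna : ‖h • B z‖ = h * ‖B z‖ := by
    rw [norm_smul, Real.norm_eq_abs, abs_of_pos hh]
  refine real_est C h h₀ _ _ ‖B z‖ ⟪B z, z⟫ hC1 hh hhh (norm_nonneg _) (norm_nonneg _)
    ?_ ?_ rfl ?_ ?_
  · calc ‖B z‖ ≤ ‖B‖ * ‖z‖ := B.le_opNorm z
    _ = ‖B‖ := by rw [hz, mul_one]
    _ ≤ C := hB
  · calc |⟪B z, z⟫| ≤ ‖B z‖ * ‖z‖ := abs_real_inner_le_norm _ _
    _ = ‖B z‖ := by rw [hz, mul_one]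
  · rw [norm_add_sq_real, hz, real_inner_smul_right, hna, real_inner_comm]
    ring
  · have h1 : ‖z‖ ≤ ‖z + h • B z‖ + ‖h • B z‖ := by
      calc ‖z‖ = ‖(z + h • B z) - h • B z‖ := by rw [add_sub_cancel_right]
      _ ≤ ‖z + h • B z‖ + ‖h • B z‖ := norm_sub_le _ _
    rw [hz, hna] at h1
    linarith

private lemma clm_eigen (S : Matrix (Fin n) (Fin n) ℝ) (hs : S.IsHermitian) (i : Fin n) :
    (Matrix.toEuclideanCLM (𝕜 := ℝ) S) (hs.eigenvectorBasis i) =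
      hs.eigenvalues i • hs.eigenvectorBasis i := by
  apply (WithLp.equiv 2 (Fin n → ℝ)).injective
  simp only [WithLp.equiv_apply, Matrix.ofLp_toEuclideanCLM, Matrix.toLin'_apply]
  exact (hs.mulVec_eigenvectorBasis i).trans (by rfl)

private lemma rayleigh_eq (S : Matrix (Fin n) (Fin n) ℝ) (hs : S.IsHermitian) (z : E) :
    ⟪(Matrix.toEuclideanCLM (𝕜 := ℝ) S) z, z⟫ =
      ∑ i, hs.eigenvalues i * (⟪hs.eigenvectorBasis i, z⟫ * ⟪hs.eigenvectorBasis i, z⟫) := by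
  set v := hs.eigenvectorBasis with hv
  set T := Matrix.toEuclideanCLM (𝕜 := ℝ) S with hT
  have hadj : ∀ x y : E, ⟪T x, y⟫ = ⟪x, T y⟫ := by
    intro x y
    have hstar : star T = T := by
      rw [hT, ← map_star, Matrix.star_eq_conjTranspose, hs.eq]
    conv_lhs => rw [← hstar, ContinuousLinearMap.star_eq_adjoint,
      ContinuousLinearMap.adjoint_inner_left]
  rw [← v.sum_inner_mul_inner (T z) z]
  refine Finset.sum_congr rfl fun i _ => ?_
  rw [hadj z (v i), clm_eigen S hs i, real_inner_smul_right, real_inner_comm z (v i)]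
  ring

private lemma parseval_one (v : OrthonormalBasis (Fin n) ℝ E) (z : E) (hz : ‖z‖ = 1) :
    ∑ i, ⟪v i, z⟫ * ⟪v i, z⟫ = 1 := by
  have h := v.sum_inner_mul_inner z z
  rw [real_inner_self_eq_norm_sq, hz] at h
  simp only [one_pow] at h
  rw [← h]
  exact Finset.sum_congr rfl fun i _ => by rw [real_inner_comm z (v i)]

private lemma rayleigh_ge [NeZero n] (S : Matrix (Fin n) (Fin n) ℝ) (hs : S.IsHermitian)
    (z : E) (hz : ‖z‖ = 1) :
    (⨅ i, hs.eigenvalues i) ≤ ⟪(Matrix.toEuclideanCLM (𝕜 := ℝ) S) z, z⟫ := by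
  rw [rayleigh_eq S hs z]
  have hp := parseval_one hs.eigenvectorBasis z hz
  calc (⨅ i, hs.eigenvalues i)
      = ∑ i, (⨅ j, hs.eigenvalues j) *
          (⟪hs.eigenvectorBasis i, z⟫ * ⟪hs.eigenvectorBasis i, z⟫) := by
        rw [← Finset.mul_sum, hp, mul_one]
    _ ≤ ∑ i, hs.eigenvalues i * (⟪hs.eigenvectorBasis i, z⟫ * ⟪hs.eigenvectorBasis i, z⟫) := by
        refine Finset.sum_le_sum fun i _ => ?_
        exact mul_le_mul_of_nonneg_right (ciInf_le (Set.finite_range _).bddBelow i)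
          (mul_self_nonneg _)

private lemma rayleigh_attained [NeZero n] (S : Matrix (Fin n) (Fin n) ℝ)
    (hs : S.IsHermitian) :
    ∃ z : E, ‖z‖ = 1 ∧ ⟪(Matrix.toEuclideanCLM (𝕜 := ℝ) S) z, z⟫ = ⨅ i, hs.eigenvalues i := by
  obtain ⟨j, hj⟩ := Finite.exists_min hs.eigenvalues
  refine ⟨hs.eigenvectorBasis j, hs.eigenvectorBasis.orthonormal.1 j, ?_⟩
  rw [clm_eigen S hs j, real_inner_smul_left, real_inner_self_eq_norm_sq,
    hs.eigenvectorBasis.orthonormal.1 j]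
  have : (⨅ i, hs.eigenvalues i) = hs.eigenvalues j :=
    le_antisymm (ciInf_le (Set.finite_range _).bddBelow j) (le_ciInf hj)
  rw [this]; ring

private lemma transpose_inner (A : Matrix (Fin n) (Fin n) ℝ) (z : E) :
    ⟪(Matrix.toEuclideanCLM (𝕜 := ℝ) Aᵀ) z, z⟫ =
      ⟪(Matrix.toEuclideanCLM (𝕜 := ℝ) A) z, z⟫ := by
  have h1 : Aᵀ = star A := by
    rw [Matrix.star_eq_conjTranspose, Matrix.conjTranspose_eq_transpose_of_trivial]
  rw [h1, map_star, ContinuousLinearMap.star_eq_adjoint,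
    ContinuousLinearMap.adjoint_inner_left, real_inner_comm]

private lemma symm_part_inner (A : Matrix (Fin n) (Fin n) ℝ) (z : E) :
    ⟪(Matrix.toEuclideanCLM (𝕜 := ℝ) (((1 : ℝ) / 2) • (A + Aᵀ))) z, z⟫ =
      ⟪(Matrix.toEuclideanCLM (𝕜 := ℝ) A) z, z⟫ := by
  rw [_root_.map_smul, map_add]
  simp only [ContinuousLinearMap.add_apply, ContinuousLinearMap.coe_smul',
    Pi.smul_apply]
  rw [real_inner_smul_left, inner_add_left, transpose_inner A z]
  ring

end Aux

set_option maxHeartbeats 1000000 in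
open RealInnerProductSpace in
/-- Quadratic error bound for the logarithmic minimum on a compact set of matrices:
`m(I + hA) = 1 + h·m_l(A) + O(h²)` uniformly for `A` in a compact set `W` and `h ∈ (0, h₀]`,
where `m_l(A)` is the smallest eigenvalue of `(A + Aᵀ)/2`. -/
theorem logMin_quadratic_error_on_compact {n : ℕ} [NeZero n]
    (W : Set (Matrix (Fin n) (Fin n) ℝ)) (hW : IsCompact W)
    (h₀ : ℝ) (hh₀ : 0 < h₀)
    (hS : ∀ A : Matrix (Fin n) (Fin n) ℝ, (((1 : ℝ) / 2) • (A + Aᵀ)).IsHermitian) :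
    ∃ M : ℝ, ∀ A ∈ W, ∀ h ∈ Set.Ioc (0 : ℝ) h₀,
      |minExp (Matrix.toEuclideanCLM (𝕜 := ℝ) (1 + h • A) :
            EuclideanSpace ℝ (Fin n) →L[ℝ] EuclideanSpace ℝ (Fin n))
          - 1 - h * (⨅ i, (hS A).eigenvalues i)| ≤ M * h ^ 2 := by
  classical
  set E := EuclideanSpace ℝ (Fin n)
  let L : Matrix (Fin n) (Fin n) ℝ →ₗ[ℝ] (E →L[ℝ] E) :=
    { toFun := fun A => Matrix.toEuclideanCLM (𝕜 := ℝ) A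
      map_add' := fun x y => map_add _ x y
      map_smul' := fun c x => _root_.map_smul _ c x }
  have hcont : Continuous fun A : Matrix (Fin n) (Fin n) ℝ => ‖L A‖ :=
    L.continuous_of_finiteDimensional.norm
  rcases W.eq_empty_or_nonempty with hWe | hne
  · exact ⟨0, fun A hA => by simp [hWe] at hA⟩
  obtain ⟨A₀, _, hmax'⟩ := hW.exists_isMaxOn hne hcont.continuousOn
  have hmax : ∀ A ∈ W, ‖L A‖ ≤ ‖L A₀‖ := hmax'
  set C : ℝ := max ‖L A₀‖ 1 with hCdef
  have hC1 : 1 ≤ C := le_max_right _ _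
  have hbound : ∀ A ∈ W, ‖(Matrix.toEuclideanCLM (𝕜 := ℝ) A : E →L[ℝ] E)‖ ≤ C :=
    fun A hA => le_trans (hmax A hA) (le_max_left _ _)
  refine ⟨8 * C ^ 2 * (1 + h₀ * C) + 2 * C ^ 2, fun A hA h hh => ?_⟩
  obtain ⟨hh1, hh2⟩ := hh
  set M : ℝ := 8 * C ^ 2 * (1 + h₀ * C) + 2 * C ^ 2 with hMdef
  set B : E →L[ℝ] E := Matrix.toEuclideanCLM (𝕜 := ℝ) A with hBdef
  set lam : ℝ := ⨅ i, (hS A).eigenvalues i with hlamdef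
  have hBC : ‖B‖ ≤ C := hbound A hA
  have hT' : (Matrix.toEuclideanCLM (𝕜 := ℝ) (1 + h • A) : E →L[ℝ] E) = 1 + h • B := by
    rw [map_add, _root_.map_smul, _root_.map_one, hBdef]
  have happ : ∀ z : E, (Matrix.toEuclideanCLM (𝕜 := ℝ) (1 + h • A) : E →L[ℝ] E) z
      = z + h • B z := by
    intro z; rw [hT']; simp
  -- pointwise estimates
  have hpt : ∀ z : E, ‖z‖ = 1 →
      |‖z + h • B z‖ - (1 + h * ⟪B z, z⟫)| ≤ M * h ^ 2 := fun z hz =>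
    pointwise_est B C h h₀ hC1 hBC hh1 hh2 z hz
  have hlam_le : ∀ z : E, ‖z‖ = 1 → lam ≤ ⟪B z, z⟫ := by
    intro z hz
    rw [hlamdef, ← symm_part_inner A z]
    exact rayleigh_ge _ (hS A) z hz
  haveI : Nonempty (Metric.sphere (0 : E) 1) :=
    (NormedSpace.sphere_nonempty.mpr zero_le_one).to_subtype
  have hbdd : BddBelow (Set.range fun z : Metric.sphere (0 : E) 1 =>
      ‖(Matrix.toEuclideanCLM (𝕜 := ℝ) (1 + h • A) : E →L[ℝ] E) (z : E)‖) := by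
    refine ⟨0, ?_⟩
    rintro x ⟨z, rfl⟩
    exact norm_nonneg _
  have hME : minExp (Matrix.toEuclideanCLM (𝕜 := ℝ) (1 + h • A) : E →L[ℝ] E)
      = ⨅ z : Metric.sphere (0 : E) 1,
          ‖(Matrix.toEuclideanCLM (𝕜 := ℝ) (1 + h • A) : E →L[ℝ] E) (z : E)‖ := rfl
  -- lower bound
  have hlow : 1 + h * lam - M * h ^ 2 ≤
      minExp (Matrix.toEuclideanCLM (𝕜 := ℝ) (1 + h • A) : E →L[ℝ] E) := by
    rw [hME]
    refine le_ciInf fun z => ?_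
    have hz : ‖(z : E)‖ = 1 := by
      have := z.2
      rwa [Metric.mem_sphere, dist_zero_right] at this
    have h1 := hpt (z : E) hz
    have h2 := hlam_le (z : E) hz
    have h3 : h * lam ≤ h * ⟪B (z : E), (z : E)⟫ :=
      mul_le_mul_of_nonneg_left h2 (le_of_lt hh1)
    have h4 : -(M * h ^ 2) ≤ ‖(z : E) + h • B (z : E)‖ - (1 + h * ⟪B (z : E), (z : E)⟫) :=
      neg_le_of_abs_le h1
    rw [happ (z : E)]
    linarith
  -- upper bound
  obtain ⟨z₀, hz₀, hq₀⟩ := rayleigh_attained (((1 : ℝ) / 2) • (A + Aᵀ)) (hS A)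
  have hq₀' : ⟪B z₀, z₀⟫ = lam := by
    rw [hBdef, ← symm_part_inner A z₀, hq₀, hlamdef]
  have hupp : minExp (Matrix.toEuclideanCLM (𝕜 := ℝ) (1 + h • A) : E →L[ℝ] E)
      ≤ 1 + h * lam + M * h ^ 2 := by
    rw [hME]
    have hz₀mem : z₀ ∈ Metric.sphere (0 : E) 1 := by
      rw [Metric.mem_sphere, dist_zero_right, hz₀]
    refine le_trans (ciInf_le hbdd ⟨z₀, hz₀mem⟩) ?_
    have h1 := hpt z₀ hz₀
    have h4 : ‖z₀ + h • B z₀‖ - (1 + h * ⟪B z₀, z₀⟫) ≤ M * h ^ 2 := le_of_abs_le h1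
    rw [happ z₀, hq₀'] at *
    linarith [le_of_abs_le h1]
  rw [abs_le]
  constructor <;> [linarith [hlow]; linarith [hupp]]
end

section
/- Let u, s ≥ 1, R > 0, and let D := { (x, y) ∈ ℝᵘ × ℝˢ : ‖x‖ ≤ R and ‖y‖ ≤ R } with Euclidean norms. Let f = (f_x, f_y) : ℝᵘ × ℝˢ → ℝᵘ × ℝˢ be a C¹ vector field generating a global flow Φ, and suppose D is an isolating block for f: ⟨f_x(q), x⟩ > 0 for all q = (x, y) with ‖x‖ = R, ‖y‖ ≤ R, and ⟨f_y(q), y⟩ < 0 for all q = (x, y) with ‖x‖ ≤ R, ‖y‖ = R. Then there exists δ > 0 such that for every h ∈ (0, δ) and every point z: if Φ(−nh, z) ∈ D for all n ∈ ℕ, then Φ(−t, z) ∈ D for all t ≥ 0. -/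
open Filter Topology
open scoped InnerProductSpace

lemma barrier_decr {φ d : ℝ → ℝ} {a t m : ℝ} (hat : a ≤ t)
    (hder : ∀ τ ∈ Set.Icc a t, HasDerivAt φ (d τ) τ)
    (hneg : ∀ τ ∈ Set.Icc a t, m ≤ φ τ → d τ < 0)
    (hφt : m ≤ φ t) : ∀ τ ∈ Set.Icc a t, m ≤ φ τ := by
  set B : Set ℝ := {τ | τ ∈ Set.Icc a t ∧ ∀ σ ∈ Set.Icc τ t, m ≤ φ σ} with hB
  have htB : t ∈ B := by
    refine ⟨⟨hat, le_rfl⟩, fun σ hσ => ?_⟩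
    have : σ = t := le_antisymm hσ.2 hσ.1
    rwa [this]
  have hne : B.Nonempty := ⟨t, htB⟩
  have hbdd : BddBelow B := ⟨a, fun τ hτ => hτ.1.1⟩
  set τ₀ := sInf B with hτ₀
  have hτ₀a : a ≤ τ₀ := le_csInf hne fun τ hτ => hτ.1.1
  have hτ₀t : τ₀ ≤ t := csInf_le hbdd htB
  have key : ∀ σ ∈ Set.Icc τ₀ t, m ≤ φ σ := by
    intro σ hσ
    rcases eq_or_lt_of_le hσ.1 with heq | hlt
    · rcases eq_or_lt_of_le hσ.2 with heq2 | hlt2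
      · rw [heq2]; exact hφt
      · have hcont : ContinuousAt φ σ :=
          (hder σ ⟨le_trans hτ₀a hσ.1, hσ.2⟩).continuousAt
        have hev : ∀ᶠ τ in 𝓝[>] σ, m ≤ φ τ := by
          filter_upwards [Ioo_mem_nhdsGT_of_mem ⟨le_rfl, hlt2⟩] with τ hτ
          have : τ₀ < τ := heq ▸ hτ.1
          obtain ⟨τ', hτ'B, hτ'lt⟩ := exists_lt_of_csInf_lt hne this
          exact hτ'B.2 τ ⟨hτ'lt.le, hτ.2.le⟩
        exact ge_of_tendsto (hcont.tendsto.mono_left nhdsWithin_le_nhds) hev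
    · obtain ⟨τ', hτ'B, hτ'lt⟩ := exists_lt_of_csInf_lt hne hlt
      exact hτ'B.2 σ ⟨hτ'lt.le, hσ.2⟩
  have hτ₀eq : τ₀ = a := by
    by_contra hne'
    have hlt : a < τ₀ := lt_of_le_of_ne hτ₀a (Ne.symm hne')
    have hmem : τ₀ ∈ Set.Icc a t := ⟨hτ₀a, hτ₀t⟩
    have hφτ₀ : m ≤ φ τ₀ := key τ₀ ⟨le_rfl, hτ₀t⟩
    have hd : d τ₀ < 0 := hneg τ₀ hmem hφτ₀
    -- slope argument: eventually to the left, φ > φ τ₀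
    have hslope := (hasDerivAt_iff_tendsto_slope.mp (hder τ₀ hmem))
    have hev : ∀ᶠ τ in 𝓝[<] τ₀, φ τ₀ < φ τ := by
      have h1 : ∀ᶠ τ in 𝓝[≠] τ₀, slope φ τ₀ τ < 0 :=
        hslope (Iio_mem_nhds hd)
      have h2 : ∀ᶠ τ in 𝓝[<] τ₀, slope φ τ₀ τ < 0 :=
        h1.filter_mono (nhdsWithin_mono _ fun x hx => ne_of_lt hx)
      filter_upwards [h2, self_mem_nhdsWithin] with τ hτs hτlt
      have hden : τ - τ₀ < 0 := sub_neg.mpr hτlt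
      have := hτs
      rw [slope_def_field] at this
      -- slope = (φ τ - φ τ₀)/(τ - τ₀)
      rcases div_neg_iff.mp this with ⟨h3, _⟩ | ⟨_, h4⟩
      · linarith
      · linarith
    obtain ⟨η, hη, hball⟩ := Metric.eventually_nhds_iff.mp (eventually_nhdsWithin_iff.mp hev)
    set τ₁ := max a (τ₀ - η / 2) with hτ₁
    have hτ₁lt : τ₁ < τ₀ := max_lt hlt (by linarith)
    have hτ₁B : τ₁ ∈ B := by
      refine ⟨⟨le_max_left _ _, le_trans hτ₁lt.le hτ₀t⟩, fun σ hσ => ?_⟩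
      rcases le_or_gt τ₀ σ with hc | hc
      · exact key σ ⟨hc, hσ.2⟩
      · have hd1 : τ₀ - η / 2 ≤ σ := le_trans (le_max_right _ _) hσ.1
        have hdist : dist σ τ₀ < η := by
          rw [Real.dist_eq, abs_of_nonpos (by linarith)]; linarith
        exact le_trans hφτ₀ (hball hdist hc).le
    exact absurd (csInf_le hbdd hτ₁B) (not_le.mpr hτ₁lt)
  intro τ hτ
  exact key τ ⟨hτ₀eq ▸ hτ.1, hτ.2⟩

lemma barrier_incr {φ d : ℝ → ℝ} {t b m : ℝ} (htb : t ≤ b)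
    (hder : ∀ τ ∈ Set.Icc t b, HasDerivAt φ (d τ) τ)
    (hpos : ∀ τ ∈ Set.Icc t b, m ≤ φ τ → 0 < d τ)
    (hφt : m ≤ φ t) : ∀ τ ∈ Set.Icc t b, m ≤ φ τ := by
  have key := barrier_decr (φ := fun σ => φ (-σ)) (d := fun σ => -(d (-σ)))
    (a := -b) (t := -t) (m := m) (by linarith)
    (fun σ hσ => by
      have hmem : -σ ∈ Set.Icc t b := ⟨by linarith [hσ.2], by linarith [hσ.1]⟩
      have := (hder (-σ) hmem).comp σ (hasDerivAt_neg σ)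
      simpa [mul_comm, Function.comp_def] using this)
    (fun σ hσ hm => by
      have hmem : -σ ∈ Set.Icc t b := ⟨by linarith [hσ.2], by linarith [hσ.1]⟩
      simpa using hpos (-σ) hmem hm)
    (by simpa using hφt)
  intro τ hτ
  have := key (-τ) ⟨by linarith [hτ.2], by linarith [hτ.1]⟩
  simpa using this

lemma pos_near_compact {X : Type*} [MetricSpace X] {g : X → ℝ} (hg : Continuous g)
    {C : Set X} (hC : IsCompact C) (hpos : ∀ q ∈ C, 0 < g q) :
    ∃ ε > 0, ∀ q : X, (∃ p ∈ C, dist q p ≤ ε) → 0 < g q := by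
  have hU : IsOpen (g ⁻¹' Set.Ioi 0) := isOpen_Ioi.preimage hg
  obtain ⟨δ, hδ, hsub⟩ := hC.exists_thickening_subset_open hU (fun q hq => hpos q hq)
  refine ⟨δ / 2, by linarith, fun q ⟨p, hp, hd⟩ => ?_⟩
  exact hsub (Metric.mem_thickening_iff.mpr ⟨p, hp, by linarith⟩)

lemma proj_dist {F : Type*} [NormedAddCommGroup F] [NormedSpace ℝ F] {R : ℝ} (hR : 0 < R)
    {x : F} (hx : R ≤ ‖x‖) :
    ‖(R / ‖x‖) • x‖ = R ∧ dist x ((R / ‖x‖) • x) = ‖x‖ - R := by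
  have hn : (0:ℝ) < ‖x‖ := lt_of_lt_of_le hR hx
  have hne : ‖x‖ ≠ 0 := ne_of_gt hn
  constructor
  · rw [norm_smul, Real.norm_eq_abs, abs_of_nonneg (by positivity), div_mul_cancel₀ _ hne]
  · have hxe : x - (R / ‖x‖) • x = (1 - R / ‖x‖) • x := by rw [sub_smul, one_smul]
    have h1 : R / ‖x‖ ≤ 1 := (div_le_one hn).mpr hx
    rw [dist_eq_norm, hxe, norm_smul, Real.norm_eq_abs, abs_of_nonneg (by linarith),
      sub_mul, one_mul, div_mul_cancel₀ _ hne]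

lemma exists_near_corner {F G : Type*} [NormedAddCommGroup F] [NormedSpace ℝ F]
    [NormedAddCommGroup G] [NormedSpace ℝ G] {R ε : ℝ} (hR : 0 < R)
    {x : F} {y : G} (hx1 : R ≤ ‖x‖) (hx2 : ‖x‖ ≤ R + ε) (hy : ‖y‖ ≤ R + ε) :
    ∃ p : F × G, (‖p.1‖ = R ∧ ‖p.2‖ ≤ R) ∧ dist (x, y) p ≤ ε := by
  have hε : 0 ≤ ε := by nlinarith [norm_nonneg x]
  obtain ⟨hxn, hxd⟩ := proj_dist hR hx1
  by_cases hyR : ‖y‖ ≤ R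
  · refine ⟨((R / ‖x‖) • x, y), ⟨hxn, hyR⟩, ?_⟩
    rw [Prod.dist_eq]
    exact max_le (by rw [hxd]; linarith) (by simp [hε])
  · push_neg at hyR
    obtain ⟨hyn, hyd⟩ := proj_dist hR hyR.le
    refine ⟨((R / ‖x‖) • x, (R / ‖y‖) • y), ⟨hxn, le_of_eq hyn⟩, ?_⟩
    rw [Prod.dist_eq]
    exact max_le (by rw [hxd]; linarith) (by rw [hyd]; linarith)

set_option maxHeartbeats 2000000 in
/-- If `D = {‖x‖ ≤ R, ‖y‖ ≤ R}` is an isolating block for the vector field `f` (the field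
points strictly outward on the exit part `‖x‖ = R` of the boundary, and strictly inward on
the entry part `‖y‖ = R`), then there is `δ > 0` such that for every `h ∈ (0, δ)`: any point
whose backward orbit under the time-`h` map stays in `D` has its entire continuous backward
orbit in `D`. -/
theorem isolating_block_discrete_backward_invariance
    {u s : ℕ} (hu : 1 ≤ u) (hs : 1 ≤ s) (R : ℝ) (hR : 0 < R)
    (f : EuclideanSpace ℝ (Fin u) × EuclideanSpace ℝ (Fin s) →
      EuclideanSpace ℝ (Fin u) × EuclideanSpace ℝ (Fin s))
    (hf : ContDiff ℝ 1 f)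
    (Φ : ℝ → EuclideanSpace ℝ (Fin u) × EuclideanSpace ℝ (Fin s) →
      EuclideanSpace ℝ (Fin u) × EuclideanSpace ℝ (Fin s))
    (hΦ0 : ∀ z, Φ 0 z = z)
    (hΦ : ∀ z t, HasDerivAt (fun τ => Φ τ z) (f (Φ t z)) t)
    (hexit : ∀ q : EuclideanSpace ℝ (Fin u) × EuclideanSpace ℝ (Fin s),
      ‖q.1‖ = R → ‖q.2‖ ≤ R → 0 < ⟪(f q).1, q.1⟫_ℝ)
    (hentry : ∀ q : EuclideanSpace ℝ (Fin u) × EuclideanSpace ℝ (Fin s),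
      ‖q.1‖ ≤ R → ‖q.2‖ = R → ⟪(f q).2, q.2⟫_ℝ < 0) :
    ∃ δ > 0, ∀ h ∈ Set.Ioo (0 : ℝ) δ,
      ∀ z : EuclideanSpace ℝ (Fin u) × EuclideanSpace ℝ (Fin s),
        (∀ n : ℕ, ‖(Φ (-(n * h)) z).1‖ ≤ R ∧ ‖(Φ (-(n * h)) z).2‖ ≤ R) →
        ∀ t ≥ (0 : ℝ), ‖(Φ (-t) z).1‖ ≤ R ∧ ‖(Φ (-t) z).2‖ ≤ R := by
  classical
  have hfc : Continuous f := hf.continuous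
  -- positivity of ⟪f₁, x⟫ near the exit corner set
  have hg₁ : Continuous fun q : EuclideanSpace ℝ (Fin u) × EuclideanSpace ℝ (Fin s) => ⟪(f q).1, q.1⟫_ℝ :=
    (continuous_fst.comp hfc).inner continuous_fst
  have hg₂ : Continuous fun q : EuclideanSpace ℝ (Fin u) × EuclideanSpace ℝ (Fin s) => -⟪(f q).2, q.2⟫_ℝ :=
    ((continuous_snd.comp hfc).inner continuous_snd).neg
  have hC₁cpt : IsCompact {q : EuclideanSpace ℝ (Fin u) × EuclideanSpace ℝ (Fin s) | ‖q.1‖ = R ∧ ‖q.2‖ ≤ R} := by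
    apply Metric.isCompact_of_isClosed_isBounded
    · exact (isClosed_eq continuous_fst.norm continuous_const).inter
        (isClosed_le continuous_snd.norm continuous_const)
    · refine (Metric.isBounded_closedBall (x := (0 : EuclideanSpace ℝ (Fin u) × EuclideanSpace ℝ (Fin s))) (r := R)).subset fun q hq => ?_
      rw [Metric.mem_closedBall, dist_zero_right, Prod.norm_def]
      exact max_le hq.1.le hq.2
  have hC₂cpt : IsCompact {q : EuclideanSpace ℝ (Fin u) × EuclideanSpace ℝ (Fin s) | ‖q.1‖ ≤ R ∧ ‖q.2‖ = R} := by
    apply Metric.isCompact_of_isClosed_isBounded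
    · exact (isClosed_le continuous_fst.norm continuous_const).inter
        (isClosed_eq continuous_snd.norm continuous_const)
    · refine (Metric.isBounded_closedBall (x := (0 : EuclideanSpace ℝ (Fin u) × EuclideanSpace ℝ (Fin s))) (r := R)).subset fun q hq => ?_
      rw [Metric.mem_closedBall, dist_zero_right, Prod.norm_def]
      exact max_le hq.1 hq.2.le
  obtain ⟨ε₁, hε₁, hP₁⟩ := pos_near_compact hg₁ hC₁cpt fun q hq => hexit q hq.1 hq.2
  obtain ⟨ε₂, hε₂, hP₂⟩ := pos_near_compact hg₂ hC₂cpt fun q hq =>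
    neg_pos.mpr (hentry q hq.1 hq.2)
  set ε := min ε₁ ε₂ with hεdef
  have hε : 0 < ε := lt_min hε₁ hε₂
  -- bound on f on the enlarged box K
  set K := {q : EuclideanSpace ℝ (Fin u) × EuclideanSpace ℝ (Fin s) | ‖q.1‖ ≤ R + ε ∧ ‖q.2‖ ≤ R + ε} with hK
  have hKcpt : IsCompact K := by
    apply Metric.isCompact_of_isClosed_isBounded
    · exact (isClosed_le continuous_fst.norm continuous_const).inter
        (isClosed_le continuous_snd.norm continuous_const)
    · refine (Metric.isBounded_closedBall (x := (0 : EuclideanSpace ℝ (Fin u) × EuclideanSpace ℝ (Fin s))) (r := R + ε)).subset fun q hq => ?_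
      rw [Metric.mem_closedBall, dist_zero_right, Prod.norm_def]
      exact max_le hq.1 hq.2
  obtain ⟨M₀, hM₀⟩ := hKcpt.exists_bound_of_continuousOn hfc.continuousOn
  set M := max M₀ 1 with hMdef
  have hM1 : (1:ℝ) ≤ M := le_max_right _ _
  have hMpos : (0:ℝ) < M := lt_of_lt_of_le one_pos hM1
  have hMb : ∀ q ∈ K, ‖f q‖ ≤ M := fun q hq => le_trans (hM₀ q hq) (le_max_left _ _)
  refine ⟨ε / (2 * M), by positivity, fun h hh z hz t ht => ?_⟩
  obtain ⟨h0, hhδ⟩ := hh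
  -- the backward curve
  set c : ℝ → EuclideanSpace ℝ (Fin u) × EuclideanSpace ℝ (Fin s) := fun τ => Φ (-τ) z with hcdef
  have hc' : ∀ τ, HasDerivAt c (-(f (c τ))) τ := by
    intro τ
    have := (hΦ z (-τ)).scomp τ (hasDerivAt_neg τ)
    simpa [Function.comp_def] using this
  have hccont : Continuous c := by
    refine continuous_iff_continuousAt.mpr fun τ => (hc' τ).continuousAt
  -- grid points
  set n := ⌊t / h⌋₊ with hn
  set a := (n : ℝ) * h with ha
  set b := ((n : ℝ) + 1) * h with hb
  have hat : a ≤ t := by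
    rw [ha, ← le_div_iff₀ h0]
    exact Nat.floor_le (div_nonneg ht h0.le)
  have htb : t ≤ b := by
    rw [hb, ← div_le_iff₀ h0]
    exact (Nat.lt_floor_add_one (t / h)).le
  have hab : a ≤ b := le_trans hat htb
  have hba : b - a = h := by rw [ha, hb]; ring
  have hca : ‖(c a).1‖ ≤ R ∧ ‖(c a).2‖ ≤ R := hz n
  have hcb : ‖(c b).1‖ ≤ R ∧ ‖(c b).2‖ ≤ R := by
    have := hz (n + 1)
    have hcast : ((n + 1 : ℕ) : ℝ) = (n : ℝ) + 1 := by push_cast; ring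
    rwa [hcast] at this
  -- Step 1 : confinement in K on [a, b]
  have hconf : ∀ τ ∈ Set.Icc a b, c τ ∈ K := by
    set Bc : Set ℝ := {τ | τ ∈ Set.Icc a b ∧ ∀ σ ∈ Set.Icc a τ, c σ ∈ K} with hBcdef
    have hcaK : c a ∈ K := ⟨le_trans hca.1 (by linarith), le_trans hca.2 (by linarith)⟩
    have haBc : a ∈ Bc := by
      refine ⟨⟨le_rfl, hab⟩, fun σ hσ => ?_⟩
      have : σ = a := le_antisymm hσ.2 hσ.1
      rwa [this]
    have hne : Bc.Nonempty := ⟨a, haBc⟩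
    have hbdd : BddAbove Bc := ⟨b, fun τ hτ => hτ.1.2⟩
    set τ₀ := sSup Bc with hτ₀def
    have hτ₀a : a ≤ τ₀ := le_csSup hbdd haBc
    have hτ₀b : τ₀ ≤ b := csSup_le hne fun τ hτ => hτ.1.2
    have hKle : ∀ σ ∈ Set.Icc a τ₀, c σ ∈ K := by
      intro σ hσ
      rcases eq_or_lt_of_le hσ.2 with heq | hlt
      · rcases eq_or_lt_of_le hσ.1 with heq2 | hlt2
        · rw [← heq2]; exact hcaK
        · -- σ = τ₀ > a : continuity from the left
          have hev : ∀ᶠ τ in 𝓝[<] σ, c τ ∈ K := by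
            filter_upwards [Ioo_mem_nhdsLT_of_mem ⟨hlt2, le_rfl⟩] with τ hτ
            have : τ < τ₀ := heq ▸ hτ.2
            obtain ⟨τ', hτ'B, hτ'lt⟩ := exists_lt_of_lt_csSup hne this
            exact hτ'B.2 τ ⟨hτ.1.le, hτ'lt.le⟩
          have h1 : ∀ᶠ τ in 𝓝[<] σ, ‖(c τ).1‖ ≤ R + ε := hev.mono fun τ hτ => hτ.1
          have h2 : ∀ᶠ τ in 𝓝[<] σ, ‖(c τ).2‖ ≤ R + ε := hev.mono fun τ hτ => hτ.2
          constructor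
          · exact le_of_tendsto (((continuous_fst.comp hccont).norm.tendsto σ).mono_left
              nhdsWithin_le_nhds) h1
          · exact le_of_tendsto (((continuous_snd.comp hccont).norm.tendsto σ).mono_left
              nhdsWithin_le_nhds) h2
      · obtain ⟨τ', hτ'B, hτ'lt⟩ := exists_lt_of_lt_csSup hne hlt
        exact hτ'B.2 σ ⟨hσ.1, hτ'lt.le⟩
    have hstrict : ∀ σ ∈ Set.Icc a τ₀, ‖(c σ).1‖ ≤ R + ε / 2 ∧ ‖(c σ).2‖ ≤ R + ε / 2 := by
      intro σ hσ
      have hlip : ‖c σ - c a‖ ≤ M * ‖σ - a‖ :=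
        Convex.norm_image_sub_le_of_norm_hasDerivWithin_le
          (f := c) (f' := fun x => -(f (c x)))
          (fun x _ => (hc' x).hasDerivWithinAt)
          (fun x hx => by rw [norm_neg]; exact hMb _ (hKle x hx))
          (convex_Icc a τ₀) ⟨le_rfl, hτ₀a⟩ hσ
      have hσa : ‖σ - a‖ ≤ h := by
        rw [Real.norm_eq_abs, abs_of_nonneg (by linarith [hσ.1])]
        have := hσ.2
        linarith [hτ₀b]
      have hMh : M * ‖σ - a‖ ≤ ε / 2 := by
        calc M * ‖σ - a‖ ≤ M * h := by nlinarith [hσa, hMpos]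
        _ ≤ M * (ε / (2 * M)) := by nlinarith [hhδ, hMpos]
        _ = ε / 2 := by
              rw [eq_div_iff (by norm_num : (2:ℝ) ≠ 0)]
              field_simp
      have hd : ‖c σ - c a‖ ≤ ε / 2 := le_trans hlip hMh
      constructor
      · have h1 : ‖(c σ).1 - (c a).1‖ ≤ ε / 2 := by
          have : ‖(c σ - c a).1‖ ≤ ‖c σ - c a‖ := norm_fst_le _
          simpa using le_trans this hd
        calc ‖(c σ).1‖ ≤ ‖(c a).1‖ + ‖(c σ).1 - (c a).1‖ := by
              have := norm_sub_norm_le ((c σ).1) ((c a).1); linarith [norm_sub_rev ((c σ).1) ((c a).1) ▸ this]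
        _ ≤ R + ε / 2 := by linarith [hca.1]
      · have h1 : ‖(c σ).2 - (c a).2‖ ≤ ε / 2 := by
          have : ‖(c σ - c a).2‖ ≤ ‖c σ - c a‖ := norm_snd_le _
          simpa using le_trans this hd
        calc ‖(c σ).2‖ ≤ ‖(c a).2‖ + ‖(c σ).2 - (c a).2‖ := by
              have := norm_sub_norm_le ((c σ).2) ((c a).2); linarith [norm_sub_rev ((c σ).2) ((c a).2) ▸ this]
        _ ≤ R + ε / 2 := by linarith [hca.2]
    have hτ₀eq : τ₀ = b := by
      by_contra hne'
      have hlt : τ₀ < b := lt_of_le_of_ne hτ₀b hne'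
      have hV : IsOpen {σ : ℝ | ‖(c σ).1‖ < R + ε ∧ ‖(c σ).2‖ < R + ε} :=
        (isOpen_lt (continuous_fst.comp hccont).norm continuous_const).inter
          (isOpen_lt (continuous_snd.comp hccont).norm continuous_const)
      have hτ₀V : τ₀ ∈ {σ : ℝ | ‖(c σ).1‖ < R + ε ∧ ‖(c σ).2‖ < R + ε} := by
        have := hstrict τ₀ ⟨hτ₀a, le_rfl⟩
        exact ⟨by linarith [this.1], by linarith [this.2]⟩
      obtain ⟨η, hη, hball⟩ := Metric.isOpen_iff.mp hV τ₀ hτ₀V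
      set τ₂ := min b (τ₀ + η / 2) with hτ₂def
      have hτ₂gt : τ₀ < τ₂ := lt_min hlt (by linarith)
      have hτ₂Bc : τ₂ ∈ Bc := by
        refine ⟨⟨le_trans hτ₀a hτ₂gt.le, min_le_left _ _⟩, fun σ hσ => ?_⟩
        rcases le_or_gt σ τ₀ with hc1 | hc1
        · exact hKle σ ⟨hσ.1, hc1⟩
        · have hσle : σ ≤ τ₀ + η / 2 := le_trans hσ.2 (min_le_right _ _)
          have hdist : dist σ τ₀ < η := by
            rw [Real.dist_eq, abs_of_nonneg (by linarith)]; linarith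
          have := hball hdist
          exact ⟨this.1.le, this.2.le⟩
      exact absurd (le_csSup hbdd hτ₂Bc) (not_le.mpr hτ₂gt)
    intro τ hτ
    exact hKle τ ⟨hτ.1, hτ₀eq ▸ hτ.2⟩
  -- Step 2 : the x–coordinate cannot exceed R at time t
  have hder1 : ∀ τ, HasDerivAt (fun τ => (c τ).1) (-(f (c τ)).1) τ := by
    intro τ
    have := ((hc' τ).hasFDerivAt.fst).hasDerivAt
    simpa using this
  have hder2 : ∀ τ, HasDerivAt (fun τ => (c τ).2) (-(f (c τ)).2) τ := by
    intro τ
    have := ((hc' τ).hasFDerivAt.snd).hasDerivAt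
    simpa using this
  have hx : ‖(c t).1‖ ≤ R := by
    by_contra hxc
    push_neg at hxc
    set φ : ℝ → ℝ := fun τ => ⟪(c τ).1, (c τ).1⟫_ℝ with hφdef
    set d : ℝ → ℝ := fun τ => ⟪(c τ).1, -(f (c τ)).1⟫_ℝ + ⟪-(f (c τ)).1, (c τ).1⟫_ℝ with hddef
    have hder : ∀ τ, HasDerivAt φ (d τ) τ := fun τ =>
      HasDerivAt.inner ℝ (hder1 τ) (hder1 τ)
    have hφnorm : ∀ τ, φ τ = ‖(c τ).1‖ ^ 2 := fun τ => real_inner_self_eq_norm_sq _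
    have hneg : ∀ τ ∈ Set.Icc a t, φ t ≤ φ τ → d τ < 0 := by
      intro τ hτ hm
      have hτab : τ ∈ Set.Icc a b := ⟨hτ.1, le_trans hτ.2 htb⟩
      have hKτ := hconf τ hτab
      have hRlt : R < ‖(c τ).1‖ := by
        rw [hφnorm, hφnorm] at hm
        nlinarith [norm_nonneg (c τ).1, norm_nonneg (c t).1]
      obtain ⟨p, hp, hdist⟩ := exists_near_corner hR hRlt.le hKτ.1 hKτ.2
      have hpos := hP₁ (c τ) ⟨p, hp, by
        rw [show ((c τ).1, (c τ).2) = c τ from rfl] at hdist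
        exact le_trans hdist (min_le_left _ _)⟩
      have hdval : d τ = -(⟪(f (c τ)).1, (c τ).1⟫_ℝ + ⟪(f (c τ)).1, (c τ).1⟫_ℝ) := by
        simp only [hddef, inner_neg_left, inner_neg_right]
        rw [real_inner_comm ((c τ).1)]
        ring
      rw [hdval]
      linarith
    have key := barrier_decr hat (fun τ _ => hder τ) hneg le_rfl
    have hφa := key a ⟨le_rfl, hat⟩
    rw [hφnorm, hφnorm] at hφa
    nlinarith [hca.1, norm_nonneg (c a).1]
  have hy : ‖(c t).2‖ ≤ R := by
    by_contra hyc
    push_neg at hyc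
    set φ : ℝ → ℝ := fun τ => ⟪(c τ).2, (c τ).2⟫_ℝ with hφdef
    set d : ℝ → ℝ := fun τ => ⟪(c τ).2, -(f (c τ)).2⟫_ℝ + ⟪-(f (c τ)).2, (c τ).2⟫_ℝ with hddef
    have hder : ∀ τ, HasDerivAt φ (d τ) τ := fun τ =>
      HasDerivAt.inner ℝ (hder2 τ) (hder2 τ)
    have hφnorm : ∀ τ, φ τ = ‖(c τ).2‖ ^ 2 := fun τ => real_inner_self_eq_norm_sq _
    have hpos : ∀ τ ∈ Set.Icc t b, φ t ≤ φ τ → 0 < d τ := by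
      intro τ hτ hm
      have hτab : τ ∈ Set.Icc a b := ⟨le_trans hat hτ.1, hτ.2⟩
      have hKτ := hconf τ hτab
      have hRlt : R < ‖(c τ).2‖ := by
        rw [hφnorm, hφnorm] at hm
        nlinarith [norm_nonneg (c τ).2, norm_nonneg (c t).2]
      obtain ⟨p, hp, hdist⟩ := exists_near_corner hR hRlt.le hKτ.2 hKτ.1
      have hdist' : dist (c τ) (p.2, p.1) ≤ ε := by
        rw [Prod.dist_eq] at hdist ⊢
        rw [max_comm] at hdist
        exact hdist
      have hpos' := hP₂ (c τ) ⟨(p.2, p.1), ⟨hp.2, hp.1⟩, le_trans hdist' (min_le_right _ _)⟩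
      have hdval : d τ = -(⟪(f (c τ)).2, (c τ).2⟫_ℝ + ⟪(f (c τ)).2, (c τ).2⟫_ℝ) := by
        simp only [hddef, inner_neg_left, inner_neg_right]
        rw [real_inner_comm ((c τ).2)]
        ring
      rw [hdval]
      linarith
    have key := barrier_incr htb (fun τ _ => hder τ) hpos le_rfl
    have hφb := key b ⟨htb, le_rfl⟩
    rw [hφnorm, hφnorm] at hφb
    nlinarith [hcb.2, norm_nonneg (c b).2]
  exact ⟨hx, hy⟩
end
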